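/- arXiv:1908.03326 — 11 statements merged into one kernel-verified Lean document; each statement's English description precedes it below -/
import Mathlib

section
/- Let U be a Hilbert space, V a Banach space, a : U × V → 𝕂 a continuous sesquilinear form bounded by M, and suppose the uniform inf-sup condition holds with constant β > 0 on subspaces U_n, V_n of equal finite dimension. Then the Ritz projection Q_n : U → U_n defined by a(Q_n w, χ) = a(w, χ) for all χ ∈ V_n satisfies ‖Q_n‖ ≤ M/β, and the Galerkin solution u_n satisfies ‖u − u_n‖ ≤ (M/β) · dist(u, U_n). -/
open Metric

/-!
The inf-sup condition and the bound on `a` give `β‖z‖ ≤ M‖y‖` whenever `z ∈ Uₙ` and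
`a z = a y` on `Vₙ`; for `y = w` and `z = Qₙ w` this is `‖Qₙ‖ ≤ M/β`. For the Céa estimate
write `u - w = p + q` with `p = uₙ - w ∈ Uₙ` and `q = u - uₙ` Galerkin-orthogonal to `Vₙ`.
In an inner product space, rescaling `p` by `‖q‖/‖p‖` and `q` by its inverse keeps `‖p + q‖`
unchanged (the mechanism behind Kato's `‖Id - P‖ = ‖P‖`), and applying the bound to
`z = (‖q‖/‖p‖) • p` yields `β‖q‖ ≤ M‖p + q‖`, hence `β‖u - uₙ‖ ≤ M‖u - w‖` for every `w ∈ Uₙ`.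
-/

section InnerProduct

variable {𝕜 E : Type*} [RCLike 𝕜] [NormedAddCommGroup E] [InnerProductSpace 𝕜 E]

theorem norm_smul_add_smul_eq_norm_add {p q : E} {s t : ℝ} (hst : s * t = 1)
    (hsp : s * ‖p‖ = ‖q‖) (htq : t * ‖q‖ = ‖p‖) :
    ‖(s : 𝕜) • p + (t : 𝕜) • q‖ = ‖p + q‖ := by
  have hcross : RCLike.re (inner 𝕜 ((s : 𝕜) • p) ((t : 𝕜) • q)) = RCLike.re (inner 𝕜 p q) := by
    rw [inner_smul_left, inner_smul_right, RCLike.conj_ofReal, ← mul_assoc,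
      ← RCLike.ofReal_mul, hst, RCLike.ofReal_one, one_mul]
  have hsq : ‖(s : 𝕜) • p + (t : 𝕜) • q‖ ^ 2 = ‖p + q‖ ^ 2 := by
    rw [norm_add_sq (𝕜 := 𝕜), norm_add_sq (𝕜 := 𝕜), hcross, norm_smul, norm_smul,
      RCLike.norm_ofReal, RCLike.norm_ofReal, mul_pow, mul_pow, sq_abs, sq_abs,
      ← mul_pow, ← mul_pow, hsp, htq]
    ring
  exact (pow_left_inj₀ (norm_nonneg _) (norm_nonneg _) two_ne_zero).1 hsq

end InnerProduct

section InfSup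

variable {𝕜 U V : Type*} [RCLike 𝕜] [NormedAddCommGroup U] [NormedSpace 𝕜 U]
  [NormedAddCommGroup V] [NormedSpace 𝕜 V] {a : U →L[𝕜] V →L[𝕜] 𝕜} {M β : ℝ}

theorem mul_norm_le_of_infSup {W : Submodule 𝕜 V} (hM : 0 ≤ M)
    (hbound : ∀ u v, ‖a u v‖ ≤ M * ‖u‖ * ‖v‖) {z y : U}
    (hz : β * ‖z‖ ≤ sSup {c : ℝ | ∃ v ∈ W, ‖v‖ = 1 ∧ c = ‖a z v‖})
    (hzy : ∀ χ ∈ W, a z χ = a y χ) :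
    β * ‖z‖ ≤ M * ‖y‖ := by
  refine hz.trans (Real.sSup_le ?_ (by positivity))
  rintro c ⟨v, hv, hv1, rfl⟩
  calc ‖a z v‖ = ‖a y v‖ := by rw [hzy v hv]
    _ ≤ M * ‖y‖ * ‖v‖ := hbound y v
    _ = M * ‖y‖ := by rw [hv1, mul_one]

theorem le_of_mul_norm_le {X : Submodule 𝕜 U} {W : Submodule 𝕜 V}
    (hX : X ≠ ⊥) (hstab : ∀ z ∈ X, ∀ y, (∀ χ ∈ W, a z χ = a y χ) → β * ‖z‖ ≤ M * ‖y‖) :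
    β ≤ M := by
  obtain ⟨u, hu, hu0⟩ := (Submodule.ne_bot_iff X).mp hX
  exact le_of_mul_le_mul_right (hstab u hu u fun _ _ => rfl) (norm_pos_iff.mpr hu0)

end InfSup

section Galerkin

variable {𝕜 U V : Type*} [RCLike 𝕜] [NormedAddCommGroup U] [InnerProductSpace 𝕜 U]
  [NormedAddCommGroup V] [NormedSpace 𝕜 V] {a : U →L[𝕜] V →L[𝕜] 𝕜} {M β : ℝ}

theorem mul_norm_le_of_galerkin_orthogonal {X : Submodule 𝕜 U}
    {W : Submodule 𝕜 V} (hM : 0 ≤ M) (hβM : β ≤ M)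
    (hstab : ∀ z ∈ X, ∀ y, (∀ χ ∈ W, a z χ = a y χ) → β * ‖z‖ ≤ M * ‖y‖)
    {p q : U} (hp : p ∈ X) (hq : ∀ χ ∈ W, a q χ = 0) :
    β * ‖q‖ ≤ M * ‖p + q‖ := by
  rcases eq_or_ne q 0 with rfl | hq0
  · simpa using mul_nonneg hM (norm_nonneg p)
  rcases eq_or_ne p 0 with rfl | hp0
  · simpa using mul_le_mul_of_nonneg_right hβM (norm_nonneg q)
  have hpn : 0 < ‖p‖ := norm_pos_iff.mpr hp0
  have hqn : 0 < ‖q‖ := norm_pos_iff.mpr hq0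
  set s := ‖q‖ / ‖p‖ with hs
  set t := ‖p‖ / ‖q‖ with ht
  have hsp : s * ‖p‖ = ‖q‖ := div_mul_cancel₀ _ hpn.ne'
  have hnorm : ‖(s : 𝕜) • p + (t : 𝕜) • q‖ = ‖p + q‖ :=
    norm_smul_add_smul_eq_norm_add (by rw [hs, ht]; field_simp) hsp (div_mul_cancel₀ _ hqn.ne')
  have hsmul : ‖(s : 𝕜) • p‖ = ‖q‖ := by
    rw [norm_smul, RCLike.norm_ofReal, abs_of_pos (by positivity), hsp]
  have hagree : ∀ χ ∈ W, a ((s : 𝕜) • p) χ = a ((s : 𝕜) • p + (t : 𝕜) • q) χ := by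
    intro χ hχ
    simp [hq χ hχ]
  simpa [hsmul, hnorm] using hstab _ (X.smul_mem _ hp) _ hagree

end Galerkin

theorem stmt1_general {𝕜 : Type*} [RCLike 𝕜]
    {U : Type*} [NormedAddCommGroup U] [InnerProductSpace 𝕜 U]
    {V : Type*} [NormedAddCommGroup V] [NormedSpace 𝕜 V]
    (a : U →L[𝕜] V →L[𝕜] 𝕜) (M : ℝ) (hM : 0 < M)
    (hbound : ∀ u v, ‖a u v‖ ≤ M * ‖u‖ * ‖v‖)
    (Un : ℕ → Subspace 𝕜 U) (Vn : ℕ → Subspace 𝕜 V)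
    (hne : ∀ n, Un n ≠ ⊥)
    (β : ℝ) (hβ : 0 < β)
    (hBNB : ∀ n, ∀ u ∈ Un n,
      β * ‖u‖ ≤ sSup {c : ℝ | ∃ v ∈ Vn n, ‖v‖ = 1 ∧ c = ‖a u v‖}) :
    (∀ n (Q : U →L[𝕜] U),
      (∀ w : U, Q w ∈ Un n) → (∀ w : U, ∀ χ ∈ Vn n, a (Q w) χ = a w χ) →
        ‖Q‖ ≤ M / β) ∧
    (∀ (L : StrongDual 𝕜 V) (u : U), (∀ v : V, a u v = L v) →
      ∀ n, ∀ un ∈ Un n, (∀ χ ∈ Vn n, a un χ = L χ) →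
        ‖u - un‖ ≤ (M / β) * infDist u (Un n : Set U)) := by
  have hstab : ∀ n, ∀ z ∈ Un n, ∀ y, (∀ χ ∈ Vn n, a z χ = a y χ) → β * ‖z‖ ≤ M * ‖y‖ :=
    fun n z hz _ hzy => mul_norm_le_of_infSup hM.le hbound (hBNB n z hz) hzy
  refine ⟨fun n Q hQ hQa => Q.opNorm_le_bound (by positivity) fun w => ?_, ?_⟩
  · rw [div_mul_eq_mul_div, le_div_iff₀' hβ]
    exact hstab n _ (hQ w) w (hQa w)
  intro L u hu n un hun hgal
  have horth : ∀ χ ∈ Vn n, a (u - un) χ = 0 := fun χ hχ => by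
    rw [map_sub, sub_apply, hu, hgal χ hχ, sub_self]
  have hdist : β * ‖u - un‖ / M ≤ infDist u (Un n : Set U) := by
    refine (le_infDist ⟨0, (Un n).zero_mem⟩).2 fun w hw => ?_
    rw [div_le_iff₀ hM, dist_eq_norm, mul_comm _ M]
    simpa using mul_norm_le_of_galerkin_orthogonal hM.le (le_of_mul_norm_le (hne n) (hstab n))
      (hstab n) ((Un n).sub_mem hun hw) horth
  rw [div_mul_eq_mul_div, le_div_iff₀' hβ]
  rwa [div_le_iff₀' hM] at hdist

/-- in a Hilbert space `U`, under the uniform inf-sup condition the Ritz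
projection `Qₙ` satisfies `‖Qₙ‖ ≤ M/β` and the Galerkin solution satisfies the
improved Céa estimate `‖u − uₙ‖ ≤ (M/β)·dist(u, Uₙ)`. -/
theorem stmt1 {𝕜 : Type*} [RCLike 𝕜]
    {U : Type*} [NormedAddCommGroup U] [InnerProductSpace 𝕜 U] [CompleteSpace U]
    {V : Type*} [NormedAddCommGroup V] [NormedSpace 𝕜 V] [CompleteSpace V]
    (a : U →L[𝕜] V →L[𝕜] 𝕜) (M : ℝ) (hM : 0 < M)
    (hbound : ∀ u v, ‖a u v‖ ≤ M * ‖u‖ * ‖v‖)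
    (Un : ℕ → Subspace 𝕜 U) (Vn : ℕ → Subspace 𝕜 V)
    (hUfin : ∀ n, FiniteDimensional 𝕜 (Un n)) (hVfin : ∀ n, FiniteDimensional 𝕜 (Vn n))
    (hdim : ∀ n, Module.finrank 𝕜 (Un n) = Module.finrank 𝕜 (Vn n))
    (hne : ∀ n, Un n ≠ ⊥) (hproper : ∀ n, Un n ≠ ⊤)
    (β : ℝ) (hβ : 0 < β)
    (hBNB : ∀ n, ∀ u ∈ Un n,
      β * ‖u‖ ≤ sSup {c : ℝ | ∃ v ∈ Vn n, ‖v‖ = 1 ∧ c = ‖a u v‖}) :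
    (∀ n (Q : U →L[𝕜] U),
      (∀ w : U, Q w ∈ Un n) → (∀ w : U, ∀ χ ∈ Vn n, a (Q w) χ = a w χ) →
        ‖Q‖ ≤ M / β) ∧
    (∀ (L : StrongDual 𝕜 V) (u : U), (∀ v : V, a u v = L v) →
      ∀ n, ∀ un ∈ Un n, (∀ χ ∈ Vn n, a un χ = L χ) →
        ‖u - un‖ ≤ (M / β) * infDist u (Un n : Set U)) :=
  stmt1_general a M hM hbound Un Vn hne β hβ hBNB
end

section
/- Let P be a bounded projection on a Hilbert space H with P ≠ 0 and P ≠ Id. Then ‖P‖ = ‖Id − P‖. -/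
/-!
Write `x = a + b` with `a = P x` and `b = x - P x`. Rescaling the two components to
`y = r • a + r⁻¹ • b` with `r = ‖b‖ / ‖a‖` leaves the cross term `2 re ⟪a, b⟫` untouched
and swaps the squared norms of the components, so `‖y‖ = ‖x‖`, while `‖P y‖ = r ‖a‖ = ‖b‖`.
Hence `‖(1 - P) x‖ ≤ ‖P‖ ‖x‖`, and by the symmetry `P ↔ 1 - P` the two norms agree.
-/

open scoped InnerProductSpace

theorem IsIdempotentElem.one_le_norm {R : Type*} [NormedRing R] {p : R}
    (hp : IsIdempotentElem p) (h0 : p ≠ 0) : 1 ≤ ‖p‖ := by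
  have hpos : 0 < ‖p‖ := norm_pos_iff.2 h0
  have h := norm_mul_le p p
  rw [hp.eq] at h
  exact le_of_mul_le_mul_right (by rwa [one_mul]) hpos

section InnerProductSpace

variable {𝕜 H : Type*} [RCLike 𝕜] [NormedAddCommGroup H] [InnerProductSpace 𝕜 H]

theorem norm_sq_ofReal_smul_add_inv_smul {r : ℝ} (hr : r ≠ 0) (a b : H) :
    ‖(r : 𝕜) • a + (r⁻¹ : 𝕜) • b‖ ^ 2 =
      (r * ‖a‖) ^ 2 + 2 * RCLike.re ⟪a, b⟫_𝕜 + (r⁻¹ * ‖b‖) ^ 2 := by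
  rw [@norm_add_sq 𝕜, ← RCLike.ofReal_inv, inner_smul_real_left, inner_smul_real_right,
    smul_smul, mul_inv_cancel₀ hr, one_smul, norm_smul, norm_smul, RCLike.norm_ofReal,
    RCLike.norm_ofReal, mul_pow, mul_pow, abs_inv, inv_pow, sq_abs]
  ring

theorem norm_div_norm_smul_add_eq_norm_add {a b : H} (ha : a ≠ 0) (hb : b ≠ 0) :
    ‖((‖b‖ / ‖a‖ : ℝ) : 𝕜) • a + ((‖b‖ / ‖a‖ : ℝ)⁻¹ : 𝕜) • b‖ = ‖a + b‖ := by
  have ha' : ‖a‖ ≠ 0 := norm_ne_zero_iff.2 ha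
  have hb' : ‖b‖ ≠ 0 := norm_ne_zero_iff.2 hb
  refine (sq_eq_sq₀ (norm_nonneg _) (norm_nonneg _)).1 ?_
  rw [norm_sq_ofReal_smul_add_inv_smul (div_ne_zero hb' ha'), @norm_add_sq 𝕜, inv_div,
    div_mul_cancel₀ _ ha', div_mul_cancel₀ _ hb']
  ring

theorem IsIdempotentElem.norm_sub_apply_le {P : H →L[𝕜] H} (hP : IsIdempotentElem P)
    {x : H} (hx : P x ≠ 0) : ‖x - P x‖ ≤ ‖P‖ * ‖x‖ := by
  have hPP : P (P x) = P x := by rw [← mul_apply_eq_comp, hP.eq]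
  rcases eq_or_ne (x - P x) 0 with hb | hb
  · rw [hb, norm_zero]
    positivity
  set r : ℝ := ‖x - P x‖ / ‖P x‖
  have hr : r * ‖P x‖ = ‖x - P x‖ := div_mul_cancel₀ _ (norm_ne_zero_iff.2 hx)
  calc ‖x - P x‖ = ‖P ((r : 𝕜) • P x + (r⁻¹ : 𝕜) • (x - P x))‖ := by
        rw [map_add, map_smul, map_smul, map_sub, hPP, sub_self, smul_zero, add_zero, norm_smul,
          RCLike.norm_ofReal, abs_of_nonneg (by positivity), hr]
    _ ≤ ‖P‖ * ‖(r : 𝕜) • P x + (r⁻¹ : 𝕜) • (x - P x)‖ := P.le_opNorm _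
    _ = ‖P‖ * ‖x‖ := by rw [norm_div_norm_smul_add_eq_norm_add hx hb, add_sub_cancel]

theorem IsIdempotentElem.norm_one_sub_le {P : H →L[𝕜] H} (hP : IsIdempotentElem P)
    (h0 : P ≠ 0) : ‖1 - P‖ ≤ ‖P‖ := by
  refine ContinuousLinearMap.opNorm_le_bound _ (norm_nonneg P) fun x ↦ ?_
  rw [sub_apply, one_apply_eq_self]
  by_cases hx : P x = 0
  · rw [hx, sub_zero]
    exact le_mul_of_one_le_left (norm_nonneg x) (hP.one_le_norm h0)
  · exact hP.norm_sub_apply_le hx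

end InnerProductSpace

theorem stmt2_general {𝕜 : Type*} [RCLike 𝕜]
    {H : Type*} [NormedAddCommGroup H] [InnerProductSpace 𝕜 H]
    (P : H →L[𝕜] H) (hproj : P.comp P = P) (h0 : P ≠ 0)
    (hid : P ≠ ContinuousLinearMap.id 𝕜 H) :
    ‖P‖ = ‖ContinuousLinearMap.id 𝕜 H - P‖ := by
  have hP : IsIdempotentElem P := hproj
  rw [← ContinuousLinearMap.one_def] at hid ⊢
  refine le_antisymm ?_ (hP.norm_one_sub_le h0)
  simpa using hP.one_sub.norm_one_sub_le (sub_ne_zero.2 hid.symm)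

/-- Kato's lemma: a bounded projection `P ≠ 0, Id` on a Hilbert space
satisfies `‖P‖ = ‖Id − P‖`. -/
theorem stmt2 {𝕜 : Type*} [RCLike 𝕜]
    {H : Type*} [NormedAddCommGroup H] [InnerProductSpace 𝕜 H] [CompleteSpace H]
    (P : H →L[𝕜] H) (hproj : P.comp P = P) (h0 : P ≠ 0)
    (hid : P ≠ ContinuousLinearMap.id 𝕜 H) :
    ‖P‖ = ‖ContinuousLinearMap.id 𝕜 H - P‖ :=
  stmt2_general P hproj h0 hid
end

section
/- Let U, V be separable reflexive Banach spaces, a : U × V → 𝕂 a continuous sesquilinear form, and (U_n), (V_n) approximating sequences with equal finite dimensions. Assume that for every n, a(u,χ) = 0 for all χ ∈ V_n with u ∈ U_n implies u = 0, and that for every L ∈ V' the discrete Galerkin solutions u_n satisfy sup_n ‖u_n‖ < ∞. Then the dual uniform inf-sup condition holds: there exists β* > 0 such that sup_{u ∈ U_n, ‖u‖=1} |a(u,v)| ≥ β*‖v‖ for all v ∈ V_n and all n. -/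
/-!
Write `‖v‖ₙ` for the supremum of `‖a u v‖` over unit vectors `u ∈ Uₙ`. If `uₙ` solves the
discrete problem for `L`, then `‖L v‖ = ‖a uₙ v‖ ≤ ‖uₙ‖ ‖v‖ₙ ≤ C_L ‖v‖ₙ` for `v ∈ Vₙ`. Hence the
vectors `v / ‖v‖ₙ`, over all `n` and all nonzero `v ∈ Vₙ`, are weakly bounded, and by
Banach–Steinhaus (applied in the double dual) they are norm bounded, which is the inf-sup bound.
-/

open Metric Filter

section WeaklyBounded

variable {𝕜 E ι : Type*} [RCLike 𝕜] [NormedAddCommGroup E] [NormedSpace 𝕜 E]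

theorem exists_norm_le_of_forall_dual_norm_le (x : ι → E)
    (h : ∀ L : StrongDual 𝕜 E, ∃ C, ∀ i, ‖L (x i)‖ ≤ C) : ∃ C, ∀ i, ‖x i‖ ≤ C := by
  obtain ⟨C, hC⟩ := banach_steinhaus (g := fun i ↦ NormedSpace.inclusionInDoubleDual 𝕜 E (x i)) h
  exact ⟨C, fun i ↦ (NormedSpace.inclusionInDoubleDualLi 𝕜 (E := E)).norm_map (x i) ▸ hC i⟩

theorem exists_pos_mul_norm_le_of_forall_dual_norm_le (x : ι → E) (p : ι → ℝ)
    (hp : ∀ i, 0 ≤ p i) (h : ∀ L : StrongDual 𝕜 E, ∃ C, ∀ i, ‖L (x i)‖ ≤ C * p i) :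
    ∃ β, 0 < β ∧ ∀ i, β * ‖x i‖ ≤ p i := by
  have hpos : ∀ i, x i ≠ 0 → 0 < p i := by
    intro i hx
    refine (hp i).lt_of_ne fun hpi ↦
      hx (SeparatingDual.eq_zero_of_forall_dual_eq_zero (R := 𝕜) fun L ↦ ?_)
    obtain ⟨C, hC⟩ := h L
    simpa [← hpi] using hC i
  obtain ⟨C, hC⟩ := exists_norm_le_of_forall_dual_norm_le (𝕜 := 𝕜) (fun i ↦ (p i : 𝕜)⁻¹ • x i)
    fun L ↦ by
      obtain ⟨C, hC⟩ := h L
      refine ⟨max C 0, fun i ↦ ?_⟩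
      rw [map_smul, norm_smul, norm_inv, RCLike.norm_ofReal, abs_of_nonneg (hp i)]
      rcases (hp i).eq_or_lt with hpi | hpi
      · simp [← hpi]
      calc (p i)⁻¹ * ‖L (x i)‖ ≤ (p i)⁻¹ * (C * p i) := by gcongr; exact hC i
        _ = C := by field_simp
        _ ≤ max C 0 := le_max_left C 0
  refine ⟨(max C 1)⁻¹, by positivity, fun i ↦ ?_⟩
  rcases eq_or_ne (x i) 0 with hx | hx
  · simpa [hx] using hp i
  have hCi : (p i)⁻¹ * ‖x i‖ ≤ max C 1 := by
    simpa [norm_smul, abs_of_nonneg (hp i)] using (hC i).trans (le_max_left C 1)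
  rw [inv_mul_le_iff₀ (hpos i hx)] at hCi
  rwa [inv_mul_le_iff₀ (by positivity), mul_comm]

end WeaklyBounded

section DualNormOn

variable {𝕜 U V : Type*} [RCLike 𝕜] [NormedAddCommGroup U] [NormedSpace 𝕜 U]
  [NormedAddCommGroup V] [NormedSpace 𝕜 V]

/-- The discrete norm `‖v‖_{V_n}` of the paper, with `W = U_n`. -/
noncomputable def dualNormOn (a : U →L[𝕜] V →L[𝕜] 𝕜) (W : Submodule 𝕜 U) (v : V) : ℝ :=
  sSup {c : ℝ | ∃ u ∈ W, ‖u‖ = 1 ∧ c = ‖a u v‖}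

variable (a : U →L[𝕜] V →L[𝕜] 𝕜) (W : Submodule 𝕜 U)

theorem dualNormOn_nonneg (v : V) : 0 ≤ dualNormOn a W v :=
  Real.sSup_nonneg <| by rintro _ ⟨u, -, -, rfl⟩; positivity

theorem norm_apply_le_dualNormOn_mul {u : U} (hu : u ∈ W) (v : V) :
    ‖a u v‖ ≤ dualNormOn a W v * ‖u‖ := by
  rcases eq_or_ne u 0 with rfl | hu0
  · simp
  have hbdd : BddAbove {c : ℝ | ∃ u ∈ W, ‖u‖ = 1 ∧ c = ‖a u v‖} := by
    refine ⟨‖a‖ * ‖v‖, ?_⟩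
    rintro _ ⟨w, -, hw, rfl⟩
    simpa [hw] using a.le_opNorm₂ w v
  have hunit : ‖(‖u‖⁻¹ : 𝕜) • u‖ = 1 := norm_smul_inv_norm hu0
  have hle := le_csSup hbdd ⟨_, W.smul_mem _ hu, hunit, rfl⟩
  rw [map_smul, smul_apply, norm_smul, norm_inv, RCLike.norm_ofReal,
    abs_norm, inv_mul_le_iff₀ (norm_pos_iff.mpr hu0)] at hle
  rwa [mul_comm] at hle

end DualNormOn

theorem stmt3_general {𝕜 : Type*} [RCLike 𝕜]
    {U V : Type*} [NormedAddCommGroup U] [NormedSpace 𝕜 U]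
    [NormedAddCommGroup V] [NormedSpace 𝕜 V]
    (a : U →L[𝕜] V →L[𝕜] 𝕜)
    (Un : ℕ → Subspace 𝕜 U) (Vn : ℕ → Subspace 𝕜 V)
    (hbdd : ∀ L : StrongDual 𝕜 V, ∃ (un : ℕ → U) (C : ℝ),
      (∀ n, un n ∈ Un n ∧ ∀ χ ∈ Vn n, a (un n) χ = L χ) ∧ ∀ n, ‖un n‖ ≤ C) :
    ∃ βs : ℝ, 0 < βs ∧ ∀ n, ∀ v ∈ Vn n,
      βs * ‖v‖ ≤ sSup {c : ℝ | ∃ u ∈ Un n, ‖u‖ = 1 ∧ c = ‖a u v‖} := by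
  obtain ⟨β, hβ, hle⟩ := exists_pos_mul_norm_le_of_forall_dual_norm_le (𝕜 := 𝕜)
    (fun i : Σ n, Vn n ↦ (i.2 : V)) (fun i ↦ dualNormOn a (Un i.1) i.2)
    (fun i ↦ dualNormOn_nonneg a _ _) fun L ↦ by
      obtain ⟨un, C, hsol, hC⟩ := hbdd L
      refine ⟨C, fun ⟨n, v, hv⟩ ↦ ?_⟩
      calc ‖L v‖ = ‖a (un n) v‖ := by rw [(hsol n).2 v hv]
        _ ≤ dualNormOn a (Un n) v * ‖un n‖ := norm_apply_le_dualNormOn_mul a _ (hsol n).1 v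
        _ ≤ C * dualNormOn a (Un n) v := by
          rw [mul_comm]; gcongr; exacts [dualNormOn_nonneg a _ v, hC n]
  exact ⟨β, hβ, fun n v hv ↦ hle ⟨n, v, hv⟩⟩

/-- if the discrete problems are uniquely solvable and the discrete
solutions stay bounded for each right-hand side `L`, then the dual uniform inf-sup
condition (BNB*) holds. -/
theorem stmt3 {𝕜 : Type*} [RCLike 𝕜]
    {U V : Type*} [NormedAddCommGroup U] [NormedSpace 𝕜 U] [CompleteSpace U]
    [NormedAddCommGroup V] [NormedSpace 𝕜 V] [CompleteSpace V]
    [TopologicalSpace.SeparableSpace U] [TopologicalSpace.SeparableSpace V]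
    (hUrefl : Function.Bijective (NormedSpace.inclusionInDoubleDual 𝕜 U))
    (hVrefl : Function.Bijective (NormedSpace.inclusionInDoubleDual 𝕜 V))
    (a : U →L[𝕜] V →L[𝕜] 𝕜) (M : ℝ)
    (hbound : ∀ u v, ‖a u v‖ ≤ M * ‖u‖ * ‖v‖)
    (Un : ℕ → Subspace 𝕜 U) (Vn : ℕ → Subspace 𝕜 V)
    (hUfin : ∀ n, FiniteDimensional 𝕜 (Un n)) (hVfin : ∀ n, FiniteDimensional 𝕜 (Vn n))
    (hne : ∀ n, Un n ≠ ⊥)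
    (hdim : ∀ n, Module.finrank 𝕜 (Un n) = Module.finrank 𝕜 (Vn n))
    (hUapprox : ∀ u : U, Tendsto (fun n => infDist u (Un n : Set U)) atTop (nhds 0))
    (hVapprox : ∀ v : V, Tendsto (fun n => infDist v (Vn n : Set V)) atTop (nhds 0))
    (huniq : ∀ n, ∀ u ∈ Un n, (∀ χ ∈ Vn n, a u χ = 0) → u = 0)
    (hbdd : ∀ L : StrongDual 𝕜 V, ∃ (un : ℕ → U) (C : ℝ),
      (∀ n, un n ∈ Un n ∧ ∀ χ ∈ Vn n, a (un n) χ = L χ) ∧ ∀ n, ‖un n‖ ≤ C) :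
    ∃ βs : ℝ, 0 < βs ∧ ∀ n, ∀ v ∈ Vn n,
      βs * ‖v‖ ≤ sSup {c : ℝ | ∃ u ∈ Un n, ‖u‖ = 1 ∧ c = ‖a u v‖} :=
  stmt3_general a Un Vn hbdd
end

section
/- Let U and V be Hilbert spaces, a : U × V → 𝕂 a continuous sesquilinear form, and U_n ⊂ U, V_n ⊂ V finite-dimensional subspaces of equal dimension. For β > 0, the condition sup_{v ∈ V_n, ‖v‖ ≤ 1} |a(u,v)| ≥ β‖u‖ for all u ∈ U_n and all n is equivalent to the condition sup_{u ∈ U_n, ‖u‖ ≤ 1} |a(u,v)| ≥ β‖v‖ for all v ∈ V_n and all n. -/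
/-!
On finite-dimensional `E`, `F` of equal dimension, a lower bound `β ‖u‖ ≤ ‖b u‖` makes
`u ↦ b u` injective, hence onto the dual of `F`. Given `v`, pick `u` with `b u = ⟪v, ·⟫`;
then `b u v = ‖v‖²` and `β ‖u‖ ≤ ‖v‖`, so `‖b.flip v‖ ≥ ‖v‖² / ‖u‖ ≥ β ‖v‖`. The inf-sup
conditions on `Uₙ × Vₙ` are these bounds for the restriction of `a`, whose dual sups are
operator norms.
-/

open Module

namespace ContinuousLinearMap

variable {𝕜 E F : Type*} [RCLike 𝕜]

theorem sSup_norm_apply_subspace_eq_norm_comp_subtypeL [NormedAddCommGroup F] [NormedSpace 𝕜 F]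
    (f : F →L[𝕜] 𝕜) (X : Subspace 𝕜 F) :
    sSup {c : ℝ | ∃ v ∈ X, ‖v‖ ≤ 1 ∧ c = ‖f v‖} = ‖f.comp X.subtypeL‖ := by
  rw [← sSup_unitClosedBall_eq_norm]
  congr 1
  ext c
  simp [eq_comm, and_left_comm]

theorem finrank_strongDual [NormedAddCommGroup F] [NormedSpace 𝕜 F] [FiniteDimensional 𝕜 F] :
    finrank 𝕜 (F →L[𝕜] 𝕜) = finrank 𝕜 F :=
  (LinearMap.toContinuousLinearMap.finrank_eq).symm.trans Subspace.dual_finrank_eq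

theorem surjective_of_le_norm_apply [NormedAddCommGroup E] [NormedSpace 𝕜 E]
    [NormedAddCommGroup F] [NormedSpace 𝕜 F] [FiniteDimensional 𝕜 E] [FiniteDimensional 𝕜 F]
    (hdim : finrank 𝕜 E = finrank 𝕜 F) (b : E →L[𝕜] F →L[𝕜] 𝕜) {β : ℝ} (hβ : 0 < β)
    (hb : ∀ u, β * ‖u‖ ≤ ‖b u‖) : Function.Surjective b := by
  have hinj : Function.Injective (b : E →ₗ[𝕜] F →L[𝕜] 𝕜) := by
    refine (injective_iff_map_eq_zero _).2 fun u hu => norm_le_zero_iff.1 ?_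
    rw [coe_coe] at hu
    exact nonpos_of_mul_nonpos_right (by simpa [hu] using hb u) hβ
  exact (LinearMap.injective_iff_surjective_of_finrank_eq_finrank
    (hdim.trans finrank_strongDual.symm)).1 hinj

theorem le_norm_flip_of_le_norm_apply [NormedAddCommGroup E] [NormedSpace 𝕜 E]
    [NormedAddCommGroup F] [InnerProductSpace 𝕜 F] [FiniteDimensional 𝕜 E] [FiniteDimensional 𝕜 F]
    (hdim : finrank 𝕜 E = finrank 𝕜 F) (b : E →L[𝕜] F →L[𝕜] 𝕜) {β : ℝ}
    (hb : ∀ u, β * ‖u‖ ≤ ‖b u‖) (v : F) : β * ‖v‖ ≤ ‖b.flip v‖ := by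
  have := FiniteDimensional.complete 𝕜 F
  rcases le_or_gt β 0 with hβ | hβ
  · exact (mul_nonpos_of_nonpos_of_nonneg hβ (norm_nonneg v)).trans (norm_nonneg _)
  rcases eq_or_ne v 0 with rfl | hv
  · simp
  obtain ⟨u, hu⟩ := surjective_of_le_norm_apply hdim b hβ hb (InnerProductSpace.toDual 𝕜 F v)
  have hbu : ‖b u‖ = ‖v‖ := by rw [hu, LinearIsometryEquiv.norm_map]
  have hbuv : ‖b.flip v u‖ = ‖v‖ ^ 2 := by
    rw [flip_apply, hu, InnerProductSpace.toDual_apply_apply, inner_self_eq_norm_sq_to_K,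
      norm_pow, RCLike.norm_ofReal, abs_norm]
  have hu0 : 0 < ‖u‖ := norm_pos_iff.2 fun h => hv (by simpa [h] using hbu.symm)
  have hmul : β * ‖u‖ * ‖v‖ ≤ ‖b.flip v‖ * ‖u‖ := calc
    β * ‖u‖ * ‖v‖ ≤ ‖v‖ * ‖v‖ := by gcongr; exact hbu ▸ hb u
    _ = ‖b.flip v u‖ := by rw [hbuv, sq]
    _ ≤ ‖b.flip v‖ * ‖u‖ := le_opNorm _ _
  exact le_of_mul_le_mul_right (by linarith) hu0

theorem forall_le_norm_apply_iff_forall_le_norm_flip [NormedAddCommGroup E]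
    [InnerProductSpace 𝕜 E] [NormedAddCommGroup F] [InnerProductSpace 𝕜 F]
    [FiniteDimensional 𝕜 E] [FiniteDimensional 𝕜 F]
    (hdim : finrank 𝕜 E = finrank 𝕜 F) (b : E →L[𝕜] F →L[𝕜] 𝕜) (β : ℝ) :
    (∀ u, β * ‖u‖ ≤ ‖b u‖) ↔ ∀ v, β * ‖v‖ ≤ ‖b.flip v‖ :=
  ⟨le_norm_flip_of_le_norm_apply hdim b, fun h u => by
    simpa using le_norm_flip_of_le_norm_apply hdim.symm b.flip h u⟩

end ContinuousLinearMap

theorem stmt4_general {𝕜 : Type*} [RCLike 𝕜]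
    {U V : Type*} [NormedAddCommGroup U] [InnerProductSpace 𝕜 U]
    [NormedAddCommGroup V] [InnerProductSpace 𝕜 V]
    (a : U →L[𝕜] V →L[𝕜] 𝕜)
    (Un : ℕ → Subspace 𝕜 U) (Vn : ℕ → Subspace 𝕜 V)
    (hUfin : ∀ n, FiniteDimensional 𝕜 (Un n)) (hVfin : ∀ n, FiniteDimensional 𝕜 (Vn n))
    (hdim : ∀ n, Module.finrank 𝕜 (Un n) = Module.finrank 𝕜 (Vn n))
    (β : ℝ) :
    (∀ n, ∀ u ∈ Un n,
        β * ‖u‖ ≤ sSup {c : ℝ | ∃ v ∈ Vn n, ‖v‖ ≤ 1 ∧ c = ‖a u v‖}) ↔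
    (∀ n, ∀ v ∈ Vn n,
        β * ‖v‖ ≤ sSup {c : ℝ | ∃ u ∈ Un n, ‖u‖ ≤ 1 ∧ c = ‖a u v‖}) := by
  refine forall_congr' fun n => ?_
  have := hUfin n
  have := hVfin n
  have hU (u : U) : sSup {c : ℝ | ∃ v ∈ Vn n, ‖v‖ ≤ 1 ∧ c = ‖a u v‖} =
      ‖(a u).comp (Vn n).subtypeL‖ :=
    ContinuousLinearMap.sSup_norm_apply_subspace_eq_norm_comp_subtypeL (a u) (Vn n)
  have hV (v : V) : sSup {c : ℝ | ∃ u ∈ Un n, ‖u‖ ≤ 1 ∧ c = ‖a u v‖} =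
      ‖(a.flip v).comp (Un n).subtypeL‖ :=
    ContinuousLinearMap.sSup_norm_apply_subspace_eq_norm_comp_subtypeL (a.flip v) (Un n)
  simp only [hU, hV]
  exact Subtype.forall.symm.trans <|
    (ContinuousLinearMap.forall_le_norm_apply_iff_forall_le_norm_flip (hdim n)
      (a.bilinearComp (Un n).subtypeL (Vn n).subtypeL) β).trans Subtype.forall

/-- for Hilbert spaces and finite-dimensional subspaces of equal dimension,
the inf-sup condition with constant `β` is equivalent to its dual counterpart with the
same constant `β`. -/
theorem stmt4 {𝕜 : Type*} [RCLike 𝕜]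
    {U V : Type*} [NormedAddCommGroup U] [InnerProductSpace 𝕜 U] [CompleteSpace U]
    [NormedAddCommGroup V] [InnerProductSpace 𝕜 V] [CompleteSpace V]
    (a : U →L[𝕜] V →L[𝕜] 𝕜)
    (Un : ℕ → Subspace 𝕜 U) (Vn : ℕ → Subspace 𝕜 V)
    (hUfin : ∀ n, FiniteDimensional 𝕜 (Un n)) (hVfin : ∀ n, FiniteDimensional 𝕜 (Vn n))
    (hne : ∀ n, Un n ≠ ⊥)
    (hdim : ∀ n, Module.finrank 𝕜 (Un n) = Module.finrank 𝕜 (Vn n))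
    (β : ℝ) (hβ : 0 < β) :
    (∀ n, ∀ u ∈ Un n,
        β * ‖u‖ ≤ sSup {c : ℝ | ∃ v ∈ Vn n, ‖v‖ ≤ 1 ∧ c = ‖a u v‖}) ↔
    (∀ n, ∀ v ∈ Vn n,
        β * ‖v‖ ≤ sSup {c : ℝ | ∃ u ∈ Un n, ‖u‖ ≤ 1 ∧ c = ‖a u v‖}) :=
  stmt4_general a Un Vn hUfin hVfin hdim β
end

section
/- Let V be a separable Hilbert space and a : V × V → 𝕂 a continuous sesquilinear form. Then a is essentially coercive if and only if there exist a finite-rank orthogonal projection P on V and α > 0 such that |a(u,u)| + ‖Pu‖² ≥ α‖u‖² for all u ∈ V. -/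
/-!
If `|a(u,u)| + ‖Pu‖² ≥ α‖u‖²` with `P` of finite rank, then `P` maps weakly null sequences to
norm null ones, so `a(uₙ,uₙ) → 0` forces `‖uₙ‖ → 0`.

Conversely, separability gives finite-dimensional subspaces `W₀ ≤ W₁ ≤ ⋯` with dense union, whose
orthogonal projections `Pₙ` converge strongly to the identity. If no `Pₙ` and `α = 1/(n+1)` work,
pick unit vectors `uₙ` with `|a(uₙ,uₙ)| + ‖Pₙuₙ‖² < 1/(n+1)`. Then `a(uₙ,uₙ) → 0`, and `uₙ` is
weakly null because `⟪v, uₙ⟫ = ⟪v, Pₙuₙ⟫ + ⟪v - Pₙv, uₙ⟫`, contradicting essential coercivity.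
-/

open Filter Topology

def IsEssentiallyCoercive {𝕜 V : Type*} [NormedField 𝕜] [SeminormedAddCommGroup V]
    [NormedSpace 𝕜 V] (a : V →L[𝕜] V →L[𝕜] 𝕜) : Prop :=
  ∀ u : ℕ → V, (∀ f : V →L[𝕜] 𝕜, Tendsto (fun n => f (u n)) atTop (𝓝 0)) →
    Tendsto (fun n => a (u n) (u n)) atTop (𝓝 0) → Tendsto (fun n => ‖u n‖) atTop (𝓝 0)

theorem tendsto_zero_of_tendsto_sq_zero {ι : Type*} {l : Filter ι} {f : ι → ℝ}
    (h : Tendsto (fun i => f i ^ 2) l (𝓝 0)) : Tendsto f l (𝓝 0) := by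
  have := (Real.continuous_sqrt.tendsto 0).comp h
  simp only [Function.comp_def, Real.sqrt_sq_eq_abs, Real.sqrt_zero] at this
  exact tendsto_zero_iff_abs_tendsto_zero f |>.mpr this

theorem FiniteDimensional.tendsto_zero_of_forall_tendsto_zero {𝕜 E ι : Type*}
    [NontriviallyNormedField 𝕜] [CompleteSpace 𝕜] [NormedAddCommGroup E] [NormedSpace 𝕜 E]
    [FiniteDimensional 𝕜 E] {l : Filter ι} {w : ι → E}
    (hw : ∀ f : E →L[𝕜] 𝕜, Tendsto (fun i => f (w i)) l (𝓝 0)) : Tendsto w l (𝓝 0) := by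
  let e := (Module.finBasis 𝕜 E).equivFunL
  have : Tendsto (fun i => e (w i)) l (𝓝 0) :=
    tendsto_pi_nhds.2 fun j => hw ((ContinuousLinearMap.proj j).comp e.toContinuousLinearMap)
  simpa [Function.comp_def] using (e.symm.continuous.tendsto 0).comp this

theorem ContinuousLinearMap.tendsto_zero_of_finiteDimensional_range {𝕜 E F ι : Type*}
    [NontriviallyNormedField 𝕜] [CompleteSpace 𝕜] [NormedAddCommGroup E] [NormedSpace 𝕜 E]
    [NormedAddCommGroup F] [NormedSpace 𝕜 F] (T : E →L[𝕜] F)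
    [FiniteDimensional 𝕜 (LinearMap.range (T : E →ₗ[𝕜] F))] {l : Filter ι} {u : ι → E}
    (hu : ∀ f : E →L[𝕜] 𝕜, Tendsto (fun i => f (u i)) l (𝓝 0)) :
    Tendsto (fun i => T (u i)) l (𝓝 0) := by
  let S := T.codRestrict (LinearMap.range (T : E →ₗ[𝕜] F)) (LinearMap.mem_range_self _)
  have := FiniteDimensional.tendsto_zero_of_forall_tendsto_zero (w := fun i => S (u i))
    fun f => hu (f.comp S)
  exact (continuous_subtype_val.tendsto 0).comp this

theorem isEssentiallyCoercive_of_le_add_norm_sq {𝕜 V F : Type*} [NontriviallyNormedField 𝕜]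
    [CompleteSpace 𝕜] [NormedAddCommGroup V] [NormedSpace 𝕜 V] [NormedAddCommGroup F]
    [NormedSpace 𝕜 F] {a : V →L[𝕜] V →L[𝕜] 𝕜} {P : V →L[𝕜] F}
    [FiniteDimensional 𝕜 (LinearMap.range (P : V →ₗ[𝕜] F))] {α : ℝ} (hα : 0 < α)
    (h : ∀ u : V, α * ‖u‖ ^ 2 ≤ ‖a u u‖ + ‖P u‖ ^ 2) : IsEssentiallyCoercive a := by
  intro u hu ha
  have hPu : Tendsto (fun n => ‖P (u n)‖ ^ 2) atTop (𝓝 0) := by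
    simpa using (P.tendsto_zero_of_finiteDimensional_range hu).norm.pow 2
  have hsum : Tendsto (fun n => (‖a (u n) (u n)‖ + ‖P (u n)‖ ^ 2) / α) atTop (𝓝 0) := by
    simpa using (ha.norm.add hPu).div_const α
  refine tendsto_zero_of_tendsto_sq_zero (squeeze_zero (fun n => by positivity) (fun n => ?_) hsum)
  rw [le_div_iff₀' hα]
  exact h (u n)

theorem exists_norm_eq_one_add_norm_sq_lt {𝕜 V F : Type*} [RCLike 𝕜] [NormedAddCommGroup V]
    [NormedSpace 𝕜 V] [SeminormedAddCommGroup F] [NormedSpace 𝕜 F]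
    {a : V →L[𝕜] V →L[𝕜] 𝕜} {P : V →L[𝕜] F} {ε : ℝ} {w : V}
    (hw : ‖a w w‖ + ‖P w‖ ^ 2 < ε * ‖w‖ ^ 2) :
    ∃ u : V, ‖u‖ = 1 ∧ ‖a u u‖ + ‖P u‖ ^ 2 < ε := by
  have hw0 : w ≠ 0 := by
    rintro rfl
    simp at hw
  refine ⟨(‖w‖⁻¹ : 𝕜) • w, norm_smul_inv_norm hw0, ?_⟩
  have hc : ‖(‖w‖⁻¹ : 𝕜)‖ = ‖w‖⁻¹ := by simp
  calc ‖a ((‖w‖⁻¹ : 𝕜) • w) ((‖w‖⁻¹ : 𝕜) • w)‖ + ‖P ((‖w‖⁻¹ : 𝕜) • w)‖ ^ 2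
      = (‖a w w‖ + ‖P w‖ ^ 2) / ‖w‖ ^ 2 := by
        simp only [map_smul, smul_apply, norm_smul, hc]
        field_simp
    _ < ε := by rwa [div_lt_iff₀ (by positivity)]

theorem exists_monotone_finiteDimensional_dense (𝕜 V : Type*) [Field 𝕜] [AddCommGroup V]
    [Module 𝕜 V] [TopologicalSpace V] [IsTopologicalAddGroup V] [ContinuousConstSMul 𝕜 V]
    [TopologicalSpace.SeparableSpace V] :
    ∃ W : ℕ → Submodule 𝕜 V, Monotone W ∧ (∀ n, FiniteDimensional 𝕜 (W n)) ∧
      ⊤ ≤ (⨆ n, W n).topologicalClosure := by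
  obtain ⟨x, hx⟩ := TopologicalSpace.exists_dense_seq V
  refine ⟨fun n => Submodule.span 𝕜 (x '' Set.Iio n), fun m n hmn => ?_, fun n => ?_, ?_⟩
  · exact Submodule.span_mono (Set.image_mono (Set.Iio_subset_Iio hmn))
  · exact FiniteDimensional.span_of_finite 𝕜 ((Set.finite_Iio n).image x)
  · rw [top_le_iff, ← Submodule.dense_iff_topologicalClosure_eq_top]
    refine hx.mono (Set.range_subset_iff.2 fun k => ?_)
    exact Submodule.mem_iSup_of_mem (k + 1) (Submodule.subset_span ⟨k, k.lt_succ_self, rfl⟩)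

section InnerProduct

variable {𝕜 V : Type*} [RCLike 𝕜] [NormedAddCommGroup V] [InnerProductSpace 𝕜 V]
  [CompleteSpace V]

theorem tendsto_apply_zero_of_tendsto_starProjection {ι : Type*} {l : Filter ι}
    {W : ι → Submodule 𝕜 V} [∀ i, (W i).HasOrthogonalProjection]
    (hW : ∀ v, Tendsto (fun i => (W i).starProjection v) l (𝓝 v)) {u : ι → V} {C : ℝ}
    (hu : ∀ i, ‖u i‖ ≤ C) (hWu : Tendsto (fun i => (W i).starProjection (u i)) l (𝓝 0))
    (f : V →L[𝕜] 𝕜) : Tendsto (fun i => f (u i)) l (𝓝 0) := by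
  set v := (InnerProductSpace.toDual 𝕜 V).symm f
  have hsplit (i : ι) : f (u i) =
      inner 𝕜 v ((W i).starProjection (u i)) + inner 𝕜 (v - (W i).starProjection v) (u i) := by
    rw [← InnerProductSpace.toDual_symm_apply, inner_sub_left,
      Submodule.inner_starProjection_left_eq_right]
    ring
  have hbound (i : ι) : ‖f (u i)‖ ≤
      ‖v‖ * ‖(W i).starProjection (u i)‖ + ‖v - (W i).starProjection v‖ * C := by
    rw [hsplit]
    refine (norm_add_le _ _).trans (add_le_add (norm_inner_le_norm _ _) ?_)
    exact (norm_inner_le_norm _ _).trans (by gcongr; exact hu i)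
  have hv : Tendsto (fun i => ‖v - (W i).starProjection v‖) l (𝓝 0) := by
    simpa only [norm_sub_rev] using (tendsto_iff_norm_sub_tendsto_zero.1 (hW v))
  refine squeeze_zero_norm hbound ?_
  simpa using (hWu.norm.const_mul ‖v‖).add (hv.mul_const C)

theorem IsEssentiallyCoercive.exists_orthogonalProjection_le_add_norm_sq
    [TopologicalSpace.SeparableSpace V] {a : V →L[𝕜] V →L[𝕜] 𝕜} (ha : IsEssentiallyCoercive a) :
    ∃ (P : V →L[𝕜] V) (α : ℝ), 0 < α ∧ P.comp P = P ∧
      (∀ u v : V, inner 𝕜 (P u) v = (inner 𝕜 u (P v) : 𝕜)) ∧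
      FiniteDimensional 𝕜 (LinearMap.range (P : V →ₗ[𝕜] V)) ∧
      ∀ u : V, α * ‖u‖ ^ 2 ≤ ‖a u u‖ + ‖P u‖ ^ 2 := by
  obtain ⟨W, hmono, hfin, hdense⟩ := exists_monotone_finiteDimensional_dense 𝕜 V
  have hW (v : V) : Tendsto (fun n => (W n).starProjection v) atTop (𝓝 v) :=
    Submodule.starProjection_tendsto_self W hmono v hdense
  by_contra! hcon
  have hbad (n : ℕ) : ∃ u : V, ‖u‖ = 1 ∧
      ‖a u u‖ + ‖(W n).starProjection u‖ ^ 2 < 1 / ((n : ℝ) + 1) := by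
    obtain ⟨w, hw⟩ := hcon (W n).starProjection (1 / ((n : ℝ) + 1)) (by positivity)
      (W n).isIdempotentElem_starProjection (W n).inner_starProjection_left_eq_right
      (by rw [Submodule.range_starProjection]; exact hfin n)
    exact exists_norm_eq_one_add_norm_sq_lt hw
  choose u hu_norm hu using hbad
  have hsmall : Tendsto (fun n => ‖a (u n) (u n)‖ + ‖(W n).starProjection (u n)‖ ^ 2)
      atTop (𝓝 0) :=
    squeeze_zero (fun n => by positivity) (fun n => (hu n).le)
      tendsto_one_div_add_atTop_nhds_zero_nat
  have ha0 : Tendsto (fun n => a (u n) (u n)) atTop (𝓝 0) :=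
    squeeze_zero_norm (fun n => le_add_of_nonneg_right (by positivity)) hsmall
  have hWu : Tendsto (fun n => (W n).starProjection (u n)) atTop (𝓝 0) :=
    tendsto_zero_iff_norm_tendsto_zero.2 <| tendsto_zero_of_tendsto_sq_zero <|
      squeeze_zero (fun n => by positivity) (fun n => le_add_of_nonneg_left (norm_nonneg _)) hsmall
  have := ha u (tendsto_apply_zero_of_tendsto_starProjection hW (fun n => (hu_norm n).le) hWu) ha0
  simp [hu_norm] at this

end InnerProduct

/-- a continuous sesquilinear form on a separable Hilbert space is
essentially coercive iff `|a(u,u)| + ‖Pu‖² ≥ α‖u‖²` for some finite-rank orthogonal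
projection `P` and some `α > 0`. -/
theorem stmt5 {𝕜 : Type*} [RCLike 𝕜]
    {V : Type*} [NormedAddCommGroup V] [InnerProductSpace 𝕜 V] [CompleteSpace V]
    [TopologicalSpace.SeparableSpace V]
    (a : V →L[𝕜] V →L[𝕜] 𝕜) :
    (∀ u : ℕ → V,
        (∀ f : V →L[𝕜] 𝕜, Tendsto (fun n => f (u n)) atTop (nhds 0)) →
        Tendsto (fun n => a (u n) (u n)) atTop (nhds 0) →
        Tendsto (fun n => ‖u n‖) atTop (nhds 0)) ↔
    (∃ (P : V →L[𝕜] V) (α : ℝ), 0 < α ∧ P.comp P = P ∧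
        (∀ u v : V, inner 𝕜 (P u) v = (inner 𝕜 u (P v) : 𝕜)) ∧
        FiniteDimensional 𝕜 (LinearMap.range (P : V →ₗ[𝕜] V)) ∧
        ∀ u : V, α * ‖u‖ ^ 2 ≤ ‖a u u‖ + ‖P u‖ ^ 2) := by
  constructor
  · exact IsEssentiallyCoercive.exists_orthogonalProjection_le_add_norm_sq
  · rintro ⟨P, α, hα, -, -, hfin, h⟩
    exact isEssentiallyCoercive_of_le_add_norm_sq hα h
end

section
/- Let V be a separable Hilbert space and a : V × V → 𝕂 a continuous essentially coercive sesquilinear form with associated operator 𝒜 : V → V'. Then the following are equivalent: (i) 𝒜 is bijective; (ii) 𝒜 is injective (uniqueness); (iii) 𝒜 is surjective (existence). -/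
/-!
Essential coercivity and separability give a Gårding-type splitting: there is a
finite-dimensional subspace `K` such that `a` is coercive on `Kᗮ`. Otherwise one finds unit
vectors `yₙ`, orthogonal to the first `n` terms of a dense sequence, with `a yₙ yₙ → 0`; such
`yₙ` converge weakly to `0`, contradicting essential coercivity. By Lax–Milgram, `a` restricted
to `Kᗮ × Kᗮ` is an isomorphism, which leaves a square linear system of size `dim K`: there
injectivity is surjectivity. Conversely, if `a` is surjective then its transpose is injective,
hence surjective (it is essentially coercive too), and so `a` is injective.
-/

open Filter Topology

section NormedSpace

variable {𝕜 : Type*} [NontriviallyNormedField 𝕜] {V : Type*} [NormedAddCommGroup V]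
  [NormedSpace 𝕜 V]

def EssentiallyCoercive (a : V →L[𝕜] V →L[𝕜] 𝕜) : Prop :=
  ∀ u : ℕ → V, (∀ f : StrongDual 𝕜 V, Tendsto (fun n => f (u n)) atTop (𝓝 0)) →
    Tendsto (fun n => a (u n) (u n)) atTop (𝓝 0) → Tendsto (fun n => ‖u n‖) atTop (𝓝 0)

theorem EssentiallyCoercive.flip {a : V →L[𝕜] V →L[𝕜] 𝕜} (hess : EssentiallyCoercive a) :
    EssentiallyCoercive a.flip :=
  fun u hweak hdiag => hess u hweak (by simpa using hdiag)

theorem mul_norm_le_norm_of_coercive (b : V →L[𝕜] V →L[𝕜] 𝕜) {α : ℝ}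
    (hb : ∀ u, α * ‖u‖ ^ 2 ≤ ‖b u u‖) (u : V) : α * ‖u‖ ≤ ‖b u‖ := by
  rcases (norm_nonneg u).eq_or_lt with hu | hu
  · simp [← hu]
  · refine le_of_mul_le_mul_right ?_ hu
    calc α * ‖u‖ * ‖u‖ = α * ‖u‖ ^ 2 := by ring
      _ ≤ ‖b u u‖ := hb u
      _ ≤ ‖b u‖ * ‖u‖ := (b u).le_opNorm u

end NormedSpace

section InnerProductSpace

variable {𝕜 : Type*} [RCLike 𝕜] {V : Type*} [NormedAddCommGroup V] [InnerProductSpace 𝕜 V]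

theorem bijective_of_coercive [CompleteSpace V] (b : V →L[𝕜] V →L[𝕜] 𝕜) {α : ℝ} (hα : 0 < α)
    (hb : ∀ u, α * ‖u‖ ^ 2 ≤ ‖b u u‖) : Function.Bijective b := by
  -- `B` is `b` read through Riesz; its range is closed, and coercivity kills its orthogonal
  -- complement
  set B : V →L⋆[𝕜] V :=
    ((InnerProductSpace.toDual 𝕜 V).symm : StrongDual 𝕜 V →L⋆[𝕜] V).comp b
  have hB : ∀ u v, inner 𝕜 (B u) v = b u v := fun u v => InnerProductSpace.toDual_symm_apply
  have hB_anti : AntilipschitzWith (Real.toNNReal α⁻¹) B := by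
    refine B.antilipschitz_of_bound fun u => ?_
    rw [Real.coe_toNNReal _ (inv_nonneg.2 hα.le), ← div_eq_inv_mul, le_div_iff₀ hα, mul_comm]
    simpa [B] using mul_norm_le_norm_of_coercive b hb u
  have hB_surj : Function.Surjective (B : V →ₗ⋆[𝕜] V) := by
    have hclosed : IsClosed (LinearMap.range (B : V →ₗ⋆[𝕜] V) : Set V) :=
      hB_anti.isClosed_range B.uniformContinuous
    rw [← LinearMap.range_eq_top, ← hclosed.submodule_topologicalClosure_eq,
      Submodule.topologicalClosure_eq_top_iff, Submodule.eq_bot_iff]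
    intro w hw
    have hw0 : b w w = 0 := by
      rw [← hB]
      exact (Submodule.mem_orthogonal _ _).1 hw _ ⟨w, rfl⟩
    have := hb w
    rw [hw0, norm_zero] at this
    simpa using nonpos_of_mul_nonpos_right this hα
  refine ⟨fun u v huv => hB_anti.injective ?_, fun φ => ?_⟩
  · simp [B, huv]
  · obtain ⟨u, hu⟩ := hB_surj ((InnerProductSpace.toDual 𝕜 V).symm φ)
    exact ⟨u, by simpa [B] using hu⟩

theorem exists_norm_eq_one_of_norm_apply_self_lt (a : V →L[𝕜] V →L[𝕜] 𝕜) {K : Submodule 𝕜 V}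
    {ε : ℝ} {u : V} (hu : u ∈ K) (hlt : ‖a u u‖ < ε * ‖u‖ ^ 2) :
    ∃ y ∈ K, ‖y‖ = 1 ∧ ‖a y y‖ < ε := by
  have hu0 : u ≠ 0 := by rintro rfl; simp at hlt
  refine ⟨(‖u‖⁻¹ : 𝕜) • u, K.smul_mem _ hu, norm_smul_inv_norm hu0, ?_⟩
  calc ‖a ((‖u‖⁻¹ : 𝕜) • u) ((‖u‖⁻¹ : 𝕜) • u)‖ = ‖a u u‖ / ‖u‖ ^ 2 := by
        simp [div_eq_inv_mul, sq, mul_assoc]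
    _ < ε := (div_lt_iff₀ (by positivity)).2 hlt

theorem DenseRange.tendsto_apply_of_inner_eq_zero [CompleteSpace V] {x : ℕ → V}
    (hx : DenseRange x) {y : ℕ → V} {C : ℝ} (hyC : ∀ n, ‖y n‖ ≤ C)
    (hxy : ∀ n, ∀ k < n, inner 𝕜 (x k) (y n) = 0) (f : StrongDual 𝕜 V) :
    Tendsto (fun n => f (y n)) atTop (𝓝 0) := by
  set w := (InnerProductSpace.toDual 𝕜 V).symm f
  have hC : 0 ≤ C := (norm_nonneg _).trans (hyC 0)
  rw [Metric.tendsto_nhds]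
  intro ε hε
  obtain ⟨k, hk⟩ := hx.exists_dist_lt w (div_pos hε (by positivity : 0 < C + 1))
  filter_upwards [eventually_gt_atTop k] with n hn
  have hfy : f (y n) = inner 𝕜 (w - x k) (y n) := by
    rw [inner_sub_left, hxy n k hn, sub_zero, InnerProductSpace.toDual_symm_apply]
  rw [dist_zero_right, hfy]
  calc ‖inner 𝕜 (w - x k) (y n)‖ ≤ dist w (x k) * C := by
        rw [dist_eq_norm]
        exact (norm_inner_le_norm _ _).trans (by gcongr; exact hyC n)
    _ ≤ dist w (x k) * (C + 1) := by gcongr; linarith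
    _ < ε := (lt_div_iff₀ (by positivity)).1 hk

theorem EssentiallyCoercive.exists_coercive_on_orthogonal [CompleteSpace V]
    [TopologicalSpace.SeparableSpace V] {a : V →L[𝕜] V →L[𝕜] 𝕜} (hess : EssentiallyCoercive a) :
    ∃ K : Submodule 𝕜 V, FiniteDimensional 𝕜 K ∧
      ∃ α > 0, ∀ u ∈ Kᗮ, α * ‖u‖ ^ 2 ≤ ‖a u u‖ := by
  obtain ⟨x, hx⟩ := TopologicalSpace.exists_dense_seq V
  by_contra! h
  set K : ℕ → Submodule 𝕜 V := fun n => Submodule.span 𝕜 (x '' Set.Iio n)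
  have hK : ∀ n, FiniteDimensional 𝕜 (K n) := fun n =>
    FiniteDimensional.span_of_finite 𝕜 ((Set.finite_Iio n).image x)
  have hy : ∀ n : ℕ, ∃ y ∈ (K n)ᗮ, ‖y‖ = 1 ∧ ‖a y y‖ < 1 / ((n : ℝ) + 1) := fun n => by
    obtain ⟨u, hu, hlt⟩ := h (K n) (hK n) _ Nat.one_div_pos_of_nat
    exact exists_norm_eq_one_of_norm_apply_self_lt a hu hlt
  choose y hyK hy1 hya using hy
  have hweak : ∀ f : StrongDual 𝕜 V, Tendsto (fun n => f (y n)) atTop (𝓝 0) :=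
    hx.tendsto_apply_of_inner_eq_zero (fun n => (hy1 n).le) fun n k hk =>
      Submodule.inner_right_of_mem_orthogonal
        (Submodule.subset_span (Set.mem_image_of_mem x hk)) (hyK n)
  have hdiag : Tendsto (fun n => a (y n) (y n)) atTop (𝓝 0) :=
    squeeze_zero_norm (fun n => (hya n).le) tendsto_one_div_add_atTop_nhds_zero_nat
  have := hess y hweak hdiag
  simp only [hy1, tendsto_const_nhds_iff] at this
  exact one_ne_zero this

theorem StrongDual.eq_zero_of_vanishes_on_orthogonal {K : Submodule 𝕜 V}
    [K.HasOrthogonalProjection] {φ : StrongDual 𝕜 V} (hK : ∀ v ∈ K, φ v = 0)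
    (hKo : ∀ v ∈ Kᗮ, φ v = 0) : φ = 0 := by
  have hker : K ⊔ Kᗮ ≤ LinearMap.ker (φ : V →ₗ[𝕜] 𝕜) := sup_le hK hKo
  ext v
  exact hker (K.sup_orthogonal_of_hasOrthogonalProjection ▸ Submodule.mem_top)

theorem exists_projection_along_orthogonal_of_bijective (a : V →L[𝕜] V →L[𝕜] 𝕜)
    (K : Submodule 𝕜 V) (hW : Function.Bijective (a.bilinearComp Kᗮ.subtypeL Kᗮ.subtypeL)) :
    ∃ J : V →ₗ[𝕜] V, (∀ v, v - J v ∈ Kᗮ) ∧ ∀ v, ∀ w ∈ Kᗮ, a (J v) w = 0 := by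
  set β := LinearEquiv.ofBijective (a.bilinearComp Kᗮ.subtypeL Kᗮ.subtypeL).toLinearMap hW
  set G : V →ₗ[𝕜] V := Kᗮ.subtype ∘ₗ β.symm.toLinearMap ∘ₗ
    (ContinuousLinearMap.precomp 𝕜 Kᗮ.subtypeL).toLinearMap ∘ₗ a.toLinearMap
  have hG : ∀ v, ∀ w ∈ Kᗮ, a (G v) w = a v w := fun v w hw =>
    congr($(β.apply_symm_apply ((a v).comp Kᗮ.subtypeL)) ⟨w, hw⟩)
  exact ⟨LinearMap.id - G, fun v => by simp [G], fun v w hw => by simp [hG v w hw]⟩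

theorem exists_apply_eq_of_vanishes_on_orthogonal (a : V →L[𝕜] V →L[𝕜] 𝕜)
    (hinj : Function.Injective a) {K : Submodule 𝕜 V} [FiniteDimensional 𝕜 K] {J : V →ₗ[𝕜] V}
    (hJ : ∀ v, v - J v ∈ Kᗮ) (haJ : ∀ v, ∀ w ∈ Kᗮ, a (J v) w = 0)
    {φ : StrongDual 𝕜 V} (hφ : ∀ w ∈ Kᗮ, φ w = 0) : ∃ u, a u = φ := by
  set M : K →ₗ[𝕜] Module.Dual 𝕜 K :=
    (ContinuousLinearMap.toLinearMap₁₂ a).compl₁₂ (J ∘ₗ K.subtype) K.subtype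
  have hM : Function.Injective M := by
    rw [injective_iff_map_eq_zero]
    intro e he
    have hJe : J e = 0 := hinj <| by
      rw [map_zero]
      refine StrongDual.eq_zero_of_vanishes_on_orthogonal (K := K) (fun v hv => ?_) (haJ e)
      simpa [M] using LinearMap.congr_fun he ⟨v, hv⟩
    have hmem : (e : V) ∈ Kᗮ := by simpa [hJe] using hJ e
    exact Subtype.ext (K.orthogonal_disjoint.le_bot ⟨e.2, hmem⟩)
  obtain ⟨e, he⟩ := (LinearMap.injective_iff_surjective_of_finrank_eq_finrank
    Subspace.dual_finrank_eq.symm).1 hM ((φ : V →ₗ[𝕜] 𝕜) ∘ₗ K.subtype)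
  refine ⟨J e, sub_eq_zero.1 <| StrongDual.eq_zero_of_vanishes_on_orthogonal (K := K)
    (fun v hv => ?_) fun v hv => by simp [haJ e v hv, hφ v hv]⟩
  simpa [M, sub_eq_zero] using LinearMap.congr_fun he ⟨v, hv⟩

theorem EssentiallyCoercive.surjective_of_injective [CompleteSpace V]
    [TopologicalSpace.SeparableSpace V] {a : V →L[𝕜] V →L[𝕜] 𝕜} (hess : EssentiallyCoercive a)
    (hinj : Function.Injective a) : Function.Surjective a := by
  obtain ⟨K, hK, α, hα, hcoer⟩ := hess.exists_coercive_on_orthogonal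
  have hW : Function.Bijective (a.bilinearComp Kᗮ.subtypeL Kᗮ.subtypeL) :=
    bijective_of_coercive _ hα fun w => hcoer w w.2
  obtain ⟨J, hJ, haJ⟩ := exists_projection_along_orthogonal_of_bijective a K hW
  intro φ
  obtain ⟨w, hw⟩ := hW.2 (φ.comp Kᗮ.subtypeL)
  obtain ⟨u, hu⟩ := exists_apply_eq_of_vanishes_on_orthogonal a hinj hJ haJ
    (φ := φ - a w) fun v hv => by simpa [sub_eq_zero] using congr($hw.symm ⟨v, hv⟩)
  exact ⟨u + w, by simp [hu]⟩

theorem ContinuousLinearMap.injective_flip_of_surjective (a : V →L[𝕜] V →L[𝕜] 𝕜)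
    (h : Function.Surjective a) : Function.Injective a.flip := by
  rw [injective_iff_map_eq_zero]
  intro w hw
  obtain ⟨u, hu⟩ := h (innerSL 𝕜 w)
  have : inner 𝕜 w w = a.flip w u := by simp [hu]
  simpa [hw] using this

theorem EssentiallyCoercive.injective_iff_surjective [CompleteSpace V]
    [TopologicalSpace.SeparableSpace V] {a : V →L[𝕜] V →L[𝕜] 𝕜} (hess : EssentiallyCoercive a) :
    Function.Injective a ↔ Function.Surjective a :=
  ⟨hess.surjective_of_injective, fun h => by
    simpa using a.flip.injective_flip_of_surjective <|
      hess.flip.surjective_of_injective (a.injective_flip_of_surjective h)⟩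

end InnerProductSpace

theorem stmt9_general {𝕜 : Type*} [RCLike 𝕜]
    {V : Type*} [NormedAddCommGroup V] [InnerProductSpace 𝕜 V] [CompleteSpace V]
    [TopologicalSpace.SeparableSpace V]
    (a : V →L[𝕜] V →L[𝕜] 𝕜)
    (hess : ∀ u : ℕ → V,
        (∀ f : StrongDual 𝕜 V, Tendsto (fun n => f (u n)) atTop (nhds 0)) →
        Tendsto (fun n => a (u n) (u n)) atTop (nhds 0) →
        Tendsto (fun n => ‖u n‖) atTop (nhds 0)) :
    ((∀ L : StrongDual 𝕜 V, ∃! u : V, ∀ v : V, a u v = L v) ↔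
      (∀ u : V, (∀ v : V, a u v = 0) → u = 0)) ∧
    ((∀ u : V, (∀ v : V, a u v = 0) → u = 0) ↔
      (∀ L : StrongDual 𝕜 V, ∃ u : V, ∀ v : V, a u v = L v)) := by
  have hinj : (∀ u : V, (∀ v : V, a u v = 0) → u = 0) ↔ Function.Injective a := by
    simp only [injective_iff_map_eq_zero, ContinuousLinearMap.ext_iff, zero_apply]
  have hsurj : (∀ L : StrongDual 𝕜 V, ∃ u : V, ∀ v : V, a u v = L v) ↔
      Function.Surjective a := by
    simp only [Function.Surjective, ContinuousLinearMap.ext_iff]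
  have hbij : (∀ L : StrongDual 𝕜 V, ∃! u : V, ∀ v : V, a u v = L v) ↔
      Function.Bijective a := by
    simp only [Function.bijective_iff_existsUnique, ContinuousLinearMap.ext_iff]
  have key : Function.Injective a ↔ Function.Surjective a :=
    EssentiallyCoercive.injective_iff_surjective hess
  simp only [hbij, hinj, hsurj, Function.Bijective, ← key, and_self, iff_self]

/-- Fredholm alternative for essentially coercive forms: for a continuous
essentially coercive form, well-posedness, uniqueness and existence are all equivalent. -/
theorem stmt9 {𝕜 : Type*} [RCLike 𝕜]
    {V : Type*} [NormedAddCommGroup V] [InnerProductSpace 𝕜 V] [CompleteSpace V]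
    [TopologicalSpace.SeparableSpace V]
    (a : V →L[𝕜] V →L[𝕜] 𝕜) (M : ℝ)
    (hbound : ∀ u v, ‖a u v‖ ≤ M * ‖u‖ * ‖v‖)
    (hess : ∀ u : ℕ → V,
        (∀ f : StrongDual 𝕜 V, Tendsto (fun n => f (u n)) atTop (nhds 0)) →
        Tendsto (fun n => a (u n) (u n)) atTop (nhds 0) →
        Tendsto (fun n => ‖u n‖) atTop (nhds 0)) :
    ((∀ L : StrongDual 𝕜 V, ∃! u : V, ∀ v : V, a u v = L v) ↔
      (∀ u : V, (∀ v : V, a u v = 0) → u = 0)) ∧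
    ((∀ u : V, (∀ v : V, a u v = 0) → u = 0) ↔
      (∀ L : StrongDual 𝕜 V, ∃ u : V, ∀ v : V, a u v = L v)) :=
  stmt9_general a hess
end

section
/- On V = ℓ²(ℕ) over ℝ, the form a(u,v) = Σ_{n≥0} (−1)ⁿ uₙ vₙ is continuous, its associated operator 𝒜 : V → V' is invertible, but a is not essentially coercive: the sequence f_n = e_{2n} + e_{2n+1} converges weakly to 0, satisfies a(f_n, f_n) = 0 for all n, yet ‖f_n‖ = √2 does not tend to 0. -/
/-!
The form is `a(u, v) = ⟪J u, v⟫`, where `J` changes the sign of the odd coordinates. `J` is a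
linear isometric involution, so continuity is Cauchy–Schwarz and invertibility is the Riesz
representation composed with `J`. Each `fₙ` is isotropic because `J fₙ = e_{2n} - e_{2n+1}` is
orthogonal to `fₙ`, and `fₙ ⇀ 0` because `⟪w, fₙ⟫ = w_{2n} + w_{2n+1}` and the coordinates of
an `ℓ²` vector tend to `0`.
-/

open Filter Topology
open scoped ENNReal lp InnerProductSpace

section Decay

variable {α : Type*} {E : α → Type*} [∀ i, NormedAddCommGroup (E i)] {p : ℝ≥0∞}

theorem Memℓp.tendsto_norm_cofinite_zero (hp : 0 < p.toReal) {f : ∀ i, E i} (hf : Memℓp f p) :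
    Tendsto (fun i => ‖f i‖) cofinite (𝓝 0) := by
  have h := (hf.summable hp).tendsto_cofinite_zero.rpow_const (p := p.toReal⁻¹)
    (Or.inr (inv_nonneg.mpr hp.le))
  simpa [← Real.rpow_mul (norm_nonneg _), mul_inv_cancel₀ hp.ne', hp.ne'] using h

theorem lp.tendsto_apply_atTop_zero {F : Type*} [NormedAddCommGroup F] (hp : 0 < p.toReal)
    (w : lp (fun _ : ℕ => F) p) : Tendsto (⇑w) atTop (𝓝 0) := by
  rw [← Nat.cofinite_eq_atTop, tendsto_zero_iff_norm_tendsto_zero]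
  exact (lp.memℓp w).tendsto_norm_cofinite_zero hp

end Decay

namespace lp

variable {α : Type*} {E : α → Type*} [∀ i, NormedAddCommGroup (E i)] [∀ i, NormedSpace ℝ (E i)]
  {p : ℝ≥0∞} {ε : α → ℝ}

theorem memℓp_smul_of_abs_eq_one (hε : ∀ i, |ε i| = 1) (u : lp E p) :
    Memℓp (fun i => ε i • u i) p :=
  (lp.memℓp u).mono' fun i => by rw [norm_smul, Real.norm_eq_abs, hε, one_mul]

noncomputable def signMulₗ (ε : α → ℝ) (hε : ∀ i, |ε i| = 1) : lp E p →ₗ[ℝ] lp E p where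
  toFun u := ⟨fun i => ε i • u i, memℓp_smul_of_abs_eq_one hε u⟩
  map_add' u v := by ext i; exact smul_add ..
  map_smul' c u := by ext i; exact smul_comm ..

@[simp]
theorem signMulₗ_apply (hε : ∀ i, |ε i| = 1) (u : lp E p) (i : α) :
    signMulₗ ε hε u i = ε i • u i :=
  rfl

theorem signMulₗ_involutive (hε : ∀ i, |ε i| = 1) :
    Function.Involutive (signMulₗ (E := E) (p := p) ε hε) := fun u => by
  ext i
  rw [signMulₗ_apply, signMulₗ_apply, smul_smul, ← abs_mul_abs_self, hε, one_mul, one_smul]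

theorem norm_signMulₗ [Fact (1 ≤ p)] (hε : ∀ i, |ε i| = 1) (u : lp E p) :
    ‖signMulₗ ε hε u‖ = ‖u‖ := by
  have hp : p ≠ 0 := (zero_lt_one.trans_le Fact.out).ne'
  have h i : ‖signMulₗ ε hε u i‖ = ‖u i‖ := by
    rw [signMulₗ_apply, norm_smul, Real.norm_eq_abs, hε, one_mul]
  exact le_antisymm (lp.norm_mono hp fun i => (h i).le) (lp.norm_mono hp fun i => (h i).ge)

noncomputable def signMul [Fact (1 ≤ p)] (ε : α → ℝ) (hε : ∀ i, |ε i| = 1) :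
    lp E p ≃ₗᵢ[ℝ] lp E p :=
  { LinearEquiv.ofInvolutive _ (signMulₗ_involutive hε) with norm_map' := norm_signMulₗ hε }

@[simp]
theorem signMul_apply [Fact (1 ≤ p)] (hε : ∀ i, |ε i| = 1) (u : lp E p) (i : α) :
    signMul ε hε u i = ε i • u i :=
  rfl

theorem signMul_single [Fact (1 ≤ p)] [DecidableEq α] (hε : ∀ i, |ε i| = 1) (i : α) (x : E i) :
    signMul ε hε (lp.single p i x) = lp.single p i (ε i • x) := by
  ext j
  obtain rfl | hji := eq_or_ne j i
  · simp
  · simp [Pi.single_eq_of_ne hji]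

theorem inner_single_add_single {ι 𝕜 : Type*} [RCLike 𝕜] [DecidableEq ι] {i j : ι} (hij : i ≠ j)
    (x y x' y' : 𝕜) :
    ⟪(lp.single 2 i x + lp.single 2 j y : ℓ²(ι, 𝕜)), lp.single 2 i x' + lp.single 2 j y'⟫_𝕜
      = (starRingEnd 𝕜) x * x' + (starRingEnd 𝕜) y * y' := by
  simp [inner_add_left, lp.inner_single_left, lp.single_apply, hij, hij.symm, mul_comm]

end lp

theorem existsUnique_inner_map_eq {𝕜 H : Type*} [RCLike 𝕜] [NormedAddCommGroup H]
    [InnerProductSpace 𝕜 H] [CompleteSpace H] (J : H ≃ₗᵢ[𝕜] H) (L : StrongDual 𝕜 H) :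
    ∃! u : H, ∀ v, ⟪J u, v⟫_𝕜 = L v := by
  simpa [ContinuousLinearMap.ext_iff] using
    ((InnerProductSpace.toDual 𝕜 H).bijective.comp J.bijective).existsUnique L

noncomputable def altSign : ℓ²(ℕ, ℝ) ≃ₗᵢ[ℝ] ℓ²(ℕ, ℝ) :=
  lp.signMul (fun n => (-1) ^ n) fun n => abs_neg_one_pow n

theorem tsum_neg_one_pow_mul_mul_eq_inner (u v : ℓ²(ℕ, ℝ)) :
    ∑' n, (-1 : ℝ) ^ n * u n * v n = ⟪altSign u, v⟫_ℝ := by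
  rw [lp.inner_eq_tsum]
  exact tsum_congr fun n => by simp [altSign, mul_comm]

theorem altSign_single_add_single (n : ℕ) (x y : ℝ) :
    altSign (lp.single 2 (2 * n) x + lp.single 2 (2 * n + 1) y)
      = lp.single 2 (2 * n) x + lp.single 2 (2 * n + 1) (-y) := by
  simp [altSign, lp.signMul_single, pow_succ, pow_mul]

theorem tendsto_dual_apply_single_add_single (L : StrongDual ℝ ℓ²(ℕ, ℝ)) :
    Tendsto (fun n => L (lp.single 2 (2 * n) 1 + lp.single 2 (2 * n + 1) 1)) atTop (𝓝 0) := by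
  set w := (InnerProductSpace.toDual ℝ ℓ²(ℕ, ℝ)).symm L
  have hLw (n : ℕ) :
      L (lp.single 2 (2 * n) 1 + lp.single 2 (2 * n + 1) 1) = w (2 * n) + w (2 * n + 1) := by
    rw [← InnerProductSpace.toDual_symm_apply, inner_add_right, lp.inner_single_right,
      lp.inner_single_right]
    simp [w]
  have hw := lp.tendsto_apply_atTop_zero (by norm_num) w
  simpa [hLw] using (hw.comp (StrictMono.tendsto_atTop fun a b h => by omega)).add
    (hw.comp (StrictMono.tendsto_atTop fun a b h => by omega))

/-- on `V = ℓ²(ℕ)` over `ℝ`, the form `a(u,v) = Σ (−1)ⁿ uₙvₙ` is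
continuous and its associated operator is invertible, but `a` is not essentially
coercive: `fₙ = e_{2n} + e_{2n+1}` tends weakly to `0`, `a(fₙ,fₙ) = 0`, yet
`‖fₙ‖ = √2`. -/
theorem stmt12 :
    letI V := lp (fun _ : ℕ => ℝ) 2
    letI a : V → V → ℝ := fun u v => ∑' n : ℕ, (-1 : ℝ) ^ n * u n * v n
    letI f : ℕ → V := fun n =>
      lp.single 2 (2 * n) (1 : ℝ) + lp.single 2 (2 * n + 1) (1 : ℝ)
    (∀ u v : V, |a u v| ≤ ‖u‖ * ‖v‖) ∧
    (∀ L : StrongDual ℝ V, ∃! u : V, ∀ v : V, a u v = L v) ∧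
    (∀ L : StrongDual ℝ V, Tendsto (fun n => L (f n)) atTop (nhds 0)) ∧
    (∀ n : ℕ, a (f n) (f n) = 0) ∧
    (∀ n : ℕ, ‖f n‖ = Real.sqrt 2) ∧
    ¬ Tendsto (fun n => ‖f n‖) atTop (nhds 0) := by
  beta_reduce
  simp only [tsum_neg_one_pow_mul_mul_eq_inner]
  have hinner (n : ℕ) (x y : ℝ) :
      ⟪(lp.single 2 (2 * n) x + lp.single 2 (2 * n + 1) y : ℓ²(ℕ, ℝ)),
        lp.single 2 (2 * n) 1 + lp.single 2 (2 * n + 1) 1⟫_ℝ = x + y := by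
    simp [lp.inner_single_add_single (show 2 * n ≠ 2 * n + 1 by omega)]
  have hnorm (n : ℕ) : ‖(lp.single 2 (2 * n) 1 + lp.single 2 (2 * n + 1) 1 : ℓ²(ℕ, ℝ))‖ = √2 := by
    rw [norm_eq_sqrt_real_inner, hinner]
    norm_num
  refine ⟨fun u v => ?_, existsUnique_inner_map_eq altSign, tendsto_dual_apply_single_add_single,
    fun n => ?_, hnorm, ?_⟩
  · rw [← altSign.norm_map u]
    exact abs_real_inner_le_norm _ _
  · rw [altSign_single_add_single, hinner]
    norm_num
  · rw [funext hnorm, tendsto_const_nhds_iff]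
    positivity
end

section
/- Let V be a separable Hilbert space and a : V × V → 𝕂 a continuous sesquilinear form that is essentially coercive and satisfies uniqueness (a(u,v) = 0 for all v implies u = 0). Then for every approximating sequence (V_n) of V there exist n₀ ∈ ℕ and β > 0 such that sup_{v ∈ V_n, ‖v‖=1} |a(u,v)| ≥ β‖u‖ for all u ∈ V_n and all n ≥ n₀. -/
/-!
Suppose the discrete inf-sup constants are not eventually bounded below. Then there are unit
vectors `w k ∈ Vn (n k)` with `n k → ∞` and `‖a (w k) v‖ ≤ ‖v‖ / (k + 1)` for `v ∈ Vn (n k)`.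
A weakly convergent subsequence has a limit `u₀` with `a u₀ v = 0` for every `v` (test against
approximants of `v` in `Vn (n k)`), so `u₀ = 0` by uniqueness. Hence `w k ⇀ 0` and
`a (w k) (w k) → 0`, and essential coercivity forces `‖w k‖ → 0`, contradicting `‖w k‖ = 1`.
-/

open Metric Filter
open scoped InnerProductSpace Topology

theorem Metric.exists_tendsto_of_tendsto_infDist {X : Type*} [PseudoMetricSpace X]
    {S : ℕ → Set X} (hS : ∀ m, (S m).Nonempty) {x : X}
    (h : Tendsto (fun m => infDist x (S m)) atTop (𝓝 0)) :
    ∃ p : ℕ → X, (∀ m, p m ∈ S m) ∧ Tendsto p atTop (𝓝 x) := by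
  have hnear : ∀ m, ∃ y ∈ S m, dist x y < infDist x (S m) + 1 / ((m : ℝ) + 1) := fun m =>
    (infDist_lt_iff (hS m)).1 (lt_add_of_pos_right _ Nat.one_div_pos_of_nat)
  choose p hpS hp using hnear
  refine ⟨p, hpS, tendsto_iff_dist_tendsto_zero.2 ?_⟩
  refine squeeze_zero (fun m => dist_nonneg) (fun m => (dist_comm (p m) x).trans_le (hp m).le) ?_
  simpa using h.add tendsto_one_div_add_atTop_nhds_zero_nat

section Normed

variable {𝕜 : Type*} [RCLike 𝕜] {E : Type*} [NormedAddCommGroup E] [NormedSpace 𝕜 E]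

theorem norm_apply_le_sSup_mul {G : Type*} [NormedAddCommGroup G] [NormedSpace 𝕜 G]
    (b : E →L[𝕜] G) (W : Submodule 𝕜 E) {v : E} (hv : v ∈ W) :
    ‖b v‖ ≤ sSup {c : ℝ | ∃ v ∈ W, ‖v‖ = 1 ∧ c = ‖b v‖} * ‖v‖ := by
  rcases eq_or_ne v 0 with rfl | hv0
  · simp
  have hbdd : BddAbove {c : ℝ | ∃ v ∈ W, ‖v‖ = 1 ∧ c = ‖b v‖} := by
    refine ⟨‖b‖, ?_⟩
    rintro c ⟨x, -, hx, rfl⟩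
    simpa [hx] using b.le_opNorm x
  have hunit : ‖b ((‖v‖⁻¹ : 𝕜) • v)‖ ≤ sSup {c : ℝ | ∃ v ∈ W, ‖v‖ = 1 ∧ c = ‖b v‖} :=
    le_csSup hbdd ⟨_, W.smul_mem _ hv, norm_smul_inv_norm hv0, rfl⟩
  rw [map_smul, norm_smul, norm_inv, RCLike.norm_ofReal, abs_norm] at hunit
  rwa [inv_mul_le_iff₀ (norm_pos_iff.2 hv0), mul_comm] at hunit

theorem exists_norm_eq_one_forall_norm_apply_le {G : Type*} [NormedAddCommGroup G]
    [NormedSpace 𝕜 G] (a : E →L[𝕜] E →L[𝕜] G) {W : Submodule 𝕜 E} {u : E} (hu : u ∈ W)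
    {ε : ℝ} (h : sSup {c : ℝ | ∃ v ∈ W, ‖v‖ = 1 ∧ c = ‖a u v‖} < ε * ‖u‖) :
    ∃ w ∈ W, ‖w‖ = 1 ∧ ∀ v ∈ W, ‖a w v‖ ≤ ε * ‖v‖ := by
  have hu0 : u ≠ 0 := by
    rintro rfl
    refine h.not_ge ?_
    rw [norm_zero, mul_zero]
    exact Real.sSup_nonneg (by rintro c ⟨v, -, -, rfl⟩; exact norm_nonneg _)
  refine ⟨(‖u‖⁻¹ : 𝕜) • u, W.smul_mem _ hu, norm_smul_inv_norm hu0, fun v hv => ?_⟩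
  calc ‖a ((‖u‖⁻¹ : 𝕜) • u) v‖ = ‖u‖⁻¹ * ‖a u v‖ := by
        rw [map_smul, smul_apply, norm_smul, norm_inv, RCLike.norm_ofReal, abs_norm]
    _ ≤ ‖u‖⁻¹ * (ε * ‖u‖ * ‖v‖) := by
        gcongr
        exact (norm_apply_le_sSup_mul (a u) W hv).trans (by gcongr)
    _ = ε * ‖v‖ := by field_simp

theorem apply_eq_zero_of_weakly_tendsto (a : E →L[𝕜] E →L[𝕜] 𝕜)
    {W : ℕ → Submodule 𝕜 E} {v : E} (hv : Tendsto (fun m => infDist v (W m : Set E)) atTop (𝓝 0))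
    {n : ℕ → ℕ} (hn : Tendsto n atTop atTop) {w : ℕ → E} {u₀ : E}
    (hw : ∀ f : StrongDual 𝕜 E, Tendsto (fun k => f (w k)) atTop (𝓝 (f u₀)))
    {C : ℝ} (hwC : ∀ k, ‖w k‖ ≤ C) {ε : ℕ → ℝ} (hε : Tendsto ε atTop (𝓝 0))
    (hsmall : ∀ k, ∀ x ∈ W (n k), ‖a (w k) x‖ ≤ ε k * ‖x‖) :
    a u₀ v = 0 := by
  obtain ⟨p, hpW, hp⟩ := exists_tendsto_of_tendsto_infDist (fun m => ⟨0, (W m).zero_mem⟩) hv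
  have hq : Tendsto (fun k => p (n k)) atTop (𝓝 v) := hp.comp hn
  have hbound : ∀ k, ‖a (w k) v‖ ≤ ‖a‖ * C * ‖v - p (n k)‖ + ε k * ‖p (n k)‖ := fun k =>
    calc ‖a (w k) v‖ = ‖a (w k) (v - p (n k)) + a (w k) (p (n k))‖ := by
          rw [← map_add, sub_add_cancel]
      _ ≤ ‖a (w k) (v - p (n k))‖ + ‖a (w k) (p (n k))‖ := norm_add_le _ _
      _ ≤ ‖a‖ * C * ‖v - p (n k)‖ + ε k * ‖p (n k)‖ := by
          gcongr
          · exact (a.le_opNorm₂ _ _).trans (by gcongr; exact hwC k)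
          · exact hsmall k _ (hpW _)
  have hbound_lim : Tendsto (fun k => ‖a‖ * C * ‖v - p (n k)‖ + ε k * ‖p (n k)‖) atTop (𝓝 0) := by
    simpa using ((tendsto_const_nhds (x := ‖a‖ * C)).mul
      ((tendsto_const_nhds (x := v)).sub hq).norm).add (hε.mul hq.norm)
  exact tendsto_nhds_unique (by simpa using hw (a.flip v)) (squeeze_zero_norm hbound hbound_lim)

end Normed

theorem exists_strictMono_weakly_tendsto {𝕜 : Type*} [RCLike 𝕜] {V : Type*}
    [NormedAddCommGroup V] [InnerProductSpace 𝕜 V] [CompleteSpace V]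
    [TopologicalSpace.SeparableSpace V]
    {u : ℕ → V} {R : ℝ} (hu : ∀ k, ‖u k‖ ≤ R) :
    ∃ u₀ : V, ∃ φ : ℕ → ℕ, StrictMono φ ∧
      ∀ f : StrongDual 𝕜 V, Tendsto (fun k => f (u (φ k))) atTop (𝓝 (f u₀)) := by
  let x : ℕ → WeakDual 𝕜 V := fun k => StrongDual.toWeakDual (InnerProductSpace.toDual 𝕜 V (u k))
  have hx : ∀ k, x k ∈ WeakDual.toStrongDual ⁻¹' closedBall 0 R := fun k => by
    simpa [x] using hu k
  obtain ⟨x₀, -, φ, hφ, hlim⟩ := WeakDual.isSeqCompact_closedBall 𝕜 V (0 : StrongDual 𝕜 V) R hx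
  set u₀ := (InnerProductSpace.toDual 𝕜 V).symm (WeakDual.toStrongDual x₀)
  have hinner : ∀ w, Tendsto (fun k => ⟪u (φ k), w⟫_𝕜) atTop (𝓝 ⟪u₀, w⟫_𝕜) := fun w => by
    simpa [u₀, x, Function.comp_def, InnerProductSpace.toDual_symm_apply] using
      ((WeakDual.eval_continuous w).tendsto x₀).comp hlim
  refine ⟨u₀, φ, hφ, fun f => ?_⟩
  obtain ⟨w, rfl⟩ := (InnerProductSpace.toDual 𝕜 V).surjective f
  simpa [InnerProductSpace.toDual_apply_apply, inner_conj_symm] using (hinner w).star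

theorem stmt13_general {𝕜 : Type*} [RCLike 𝕜]
    {V : Type*} [NormedAddCommGroup V] [InnerProductSpace 𝕜 V] [CompleteSpace V]
    [TopologicalSpace.SeparableSpace V]
    (a : V →L[𝕜] V →L[𝕜] 𝕜)
    (hess : ∀ u : ℕ → V,
        (∀ f : StrongDual 𝕜 V, Tendsto (fun n => f (u n)) atTop (nhds 0)) →
        Tendsto (fun n => a (u n) (u n)) atTop (nhds 0) →
        Tendsto (fun n => ‖u n‖) atTop (nhds 0))
    (huniq : ∀ u : V, (∀ v : V, a u v = 0) → u = 0)
    (Vn : ℕ → Subspace 𝕜 V)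
    (happrox : ∀ v : V, Tendsto (fun n => infDist v (Vn n : Set V)) atTop (nhds 0)) :
    ∃ (n₀ : ℕ) (β : ℝ), 0 < β ∧ ∀ n ≥ n₀, ∀ u ∈ Vn n,
      β * ‖u‖ ≤ sSup {c : ℝ | ∃ v ∈ Vn n, ‖v‖ = 1 ∧ c = ‖a u v‖} := by
  by_contra! hcon
  have hbad : ∀ k : ℕ, ∃ n ≥ k, ∃ w ∈ Vn n, ‖w‖ = 1 ∧
      ∀ v ∈ Vn n, ‖a w v‖ ≤ 1 / ((k : ℝ) + 1) * ‖v‖ := fun k => by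
    obtain ⟨n, hn, u, hu, hlt⟩ := hcon k _ Nat.one_div_pos_of_nat
    exact ⟨n, hn, exists_norm_eq_one_forall_norm_apply_le a hu hlt⟩
  choose n hn w hwV hw1 hsmall using hbad
  obtain ⟨u₀, φ, hφ, hweak⟩ := exists_strictMono_weakly_tendsto (𝕜 := 𝕜) fun k => (hw1 k).le
  have hnφ : Tendsto (fun k => n (φ k)) atTop atTop :=
    tendsto_atTop_mono (fun k => (hφ.id_le k).trans (hn _)) tendsto_id
  have hε : Tendsto (fun k => 1 / ((φ k : ℝ) + 1)) atTop (𝓝 0) :=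
    tendsto_one_div_add_atTop_nhds_zero_nat.comp hφ.tendsto_atTop
  have hu₀ : u₀ = 0 := huniq u₀ fun v => apply_eq_zero_of_weakly_tendsto a (happrox v) hnφ
    hweak (fun k => (hw1 (φ k)).le) hε fun k => hsmall (φ k)
  have hdiag : Tendsto (fun k => a (w (φ k)) (w (φ k))) atTop (𝓝 0) :=
    squeeze_zero_norm (fun k => by simpa [hw1] using hsmall (φ k) _ (hwV _)) hε
  have hnorm := hess _ (by simpa [hu₀] using hweak) hdiag
  simp [hw1] at hnorm

/-- an essentially coercive continuous form satisfying uniqueness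
satisfies the uniform inf-sup condition, eventually, along any approximating
sequence of finite-dimensional subspaces. -/
theorem stmt13 {𝕜 : Type*} [RCLike 𝕜]
    {V : Type*} [NormedAddCommGroup V] [InnerProductSpace 𝕜 V] [CompleteSpace V]
    [TopologicalSpace.SeparableSpace V]
    (a : V →L[𝕜] V →L[𝕜] 𝕜) (M : ℝ)
    (hbound : ∀ u v, ‖a u v‖ ≤ M * ‖u‖ * ‖v‖)
    (hess : ∀ u : ℕ → V,
        (∀ f : StrongDual 𝕜 V, Tendsto (fun n => f (u n)) atTop (nhds 0)) →
        Tendsto (fun n => a (u n) (u n)) atTop (nhds 0) →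
        Tendsto (fun n => ‖u n‖) atTop (nhds 0))
    (huniq : ∀ u : V, (∀ v : V, a u v = 0) → u = 0)
    (Vn : ℕ → Subspace 𝕜 V)
    (hfin : ∀ n, FiniteDimensional 𝕜 (Vn n))
    (happrox : ∀ v : V, Tendsto (fun n => infDist v (Vn n : Set V)) atTop (nhds 0)) :
    ∃ (n₀ : ℕ) (β : ℝ), 0 < β ∧ ∀ n ≥ n₀, ∀ u ∈ Vn n,
      β * ‖u‖ ≤ sSup {c : ℝ | ∃ v ∈ Vn n, ‖v‖ = 1 ∧ c = ‖a u v‖} :=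
  stmt13_general a hess huniq Vn happrox
end

section
/- Let V ↪ H ↪ V' be a Gelfand triple of separable Hilbert spaces, X ↪ V' a Banach space continuously embedded in V', a : V × V → 𝕂 a continuous form bounded by M satisfying the uniform inf-sup condition with constant β on an approximating sequence (V_n), and 𝒜 : V → V' its invertible associated operator. Define γ_n(X) = sup_{f ∈ X, ‖f‖_X = 1} dist(𝒜⁻¹f, V_n) and γ_n*(H) similarly for the adjoint form. Then for every L ∈ X, the solution u of a(u,·) = L and the Galerkin solutions u_n ∈ V_n satisfy ‖u − u_n‖_H ≤ (M²/β) · γ_n(X) · γ_n*(H) · ‖L‖_X. -/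
open Metric Filter

/-!
Galerkin orthogonality and duality. Let `w` solve the adjoint problem with data `u - uₙ ∈ H`.
Then `‖u - uₙ‖_H² = a(u - uₙ, w - χ) ≤ M ‖u - uₙ‖_V dist(w, Vₙ)` for every `χ ∈ Vₙ`, while
`dist(w, Vₙ) ≤ γₙ*(H) ‖u - uₙ‖_H` and `dist(u, Vₙ) ≤ γₙ(X) ‖L‖_X`. The remaining factor `M/β` is the
Xu–Zikatanov quasi-optimality `‖u - uₙ‖_V ≤ (M/β) dist(u, Vₙ)`, sharper than Céa's `1 + M/β`: it
rests on the Hilbert-space identity `‖P‖ = ‖I - P‖` for the Galerkin projection `P`, which on the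
real plane spanned by `uₙ - χ` and `u - uₙ` is a discriminant inequality.
The suprema `γₙ` are finite because `𝒜⁻¹` and the adjoint solution operator are bounded, by the
closed graph theorem.
-/

lemma sq_le_of_forall_quadratic {a b c C : ℝ} (ha : 0 ≤ a) (hb : 0 ≤ b) (hC : 1 ≤ C)
    (h : ∀ t : ℝ, t ^ 2 * a ^ 2 ≤ C ^ 2 * (b ^ 2 - 2 * t * c + t ^ 2 * a ^ 2)) :
    b ^ 2 ≤ C ^ 2 * (a ^ 2 + 2 * c + b ^ 2) := by
  set D := Real.sqrt (C ^ 2 - 1)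
  have hD2 : D ^ 2 = C ^ 2 - 1 := Real.sq_sqrt (by nlinarith)
  have hquad : ∀ t : ℝ, 0 ≤ D ^ 2 * a ^ 2 * (t * t) + -(2 * C ^ 2 * c) * t + C ^ 2 * b ^ 2 := by
    intro t
    rw [hD2]
    nlinarith [h t]
  have hdisc := discrim_le_zero hquad
  rw [discrim] at hdisc
  have hc : (C * c) ^ 2 ≤ (D * a * b) ^ 2 := by nlinarith
  have hDab : 0 ≤ D * a * b := by positivity
  have hcD : -(D * a * b) ≤ C * c := by nlinarith [sq_nonneg (C * c + D * a * b)]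
  nlinarith [sq_nonneg (C * a - D * b)]

lemma norm_le_mul_norm_add_of_forall_ofReal_smul {𝕜 E : Type*} [RCLike 𝕜] [NormedAddCommGroup E]
    [InnerProductSpace 𝕜 E] {C : ℝ} (hC : 1 ≤ C) (A B : E)
    (h : ∀ t : ℝ, ‖(t : 𝕜) • A‖ ≤ C * ‖B - (t : 𝕜) • A‖) :
    ‖B‖ ≤ C * ‖A + B‖ := by
  set c := RCLike.re (inner 𝕜 A B)
  have hnorm_smul : ∀ t : ℝ, ‖(t : 𝕜) • A‖ ^ 2 = t ^ 2 * ‖A‖ ^ 2 := fun t => by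
    rw [norm_smul, RCLike.norm_ofReal, mul_pow, sq_abs]
  have hnorm_sub : ∀ t : ℝ, ‖B - (t : 𝕜) • A‖ ^ 2 = ‖B‖ ^ 2 - 2 * t * c + t ^ 2 * ‖A‖ ^ 2 := by
    intro t
    rw [@norm_sub_sq 𝕜, hnorm_smul, inner_smul_right, RCLike.re_ofReal_mul, ← inner_conj_symm,
      RCLike.conj_re]
    ring
  have hsq : ‖B‖ ^ 2 ≤ (C * ‖A + B‖) ^ 2 := by
    rw [mul_pow, @norm_add_sq 𝕜]
    refine sq_le_of_forall_quadratic (norm_nonneg A) (norm_nonneg B) hC fun t => ?_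
    rw [← hnorm_sub, ← hnorm_smul, ← mul_pow]
    exact pow_le_pow_left₀ (norm_nonneg _) (h t) 2
  exact (pow_le_pow_iff_left₀ (norm_nonneg _) (by positivity) two_ne_zero).1 hsq

theorem exists_continuousLinearMap_of_separating {𝕜 E F ι : Type*} [NontriviallyNormedField 𝕜]
    [NormedAddCommGroup E] [NormedSpace 𝕜 E] [CompleteSpace E]
    [NormedAddCommGroup F] [NormedSpace 𝕜 F] [CompleteSpace F]
    (ℓ : ι → F →L[𝕜] 𝕜) (hℓ : ∀ z, (∀ k, ℓ k z = 0) → z = 0)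
    (f : E → F) (φ : ι → E →L[𝕜] 𝕜) (hf : ∀ k x, ℓ k (f x) = φ k x) :
    ∃ T : E →L[𝕜] F, ⇑T = f := by
  have eq_of : ∀ y z, (∀ k, ℓ k y = ℓ k z) → y = z := fun y z h =>
    sub_eq_zero.1 (hℓ _ fun k => by rw [map_sub, h, sub_self])
  let T : E →ₗ[𝕜] F :=
    { toFun := f
      map_add' := fun x y => eq_of _ _ fun k => by simp only [map_add, hf]
      map_smul' := fun c x => eq_of _ _ fun k => by simp only [map_smul, hf, RingHom.id_apply] }
  refine ⟨⟨T, T.continuous_of_seq_closed_graph fun u x y hu hTu => eq_of _ _ fun k => ?_⟩, rfl⟩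
  refine tendsto_nhds_unique (((ℓ k).continuous.tendsto y).comp hTu) ?_
  simpa only [Function.comp_def, T, LinearMap.coe_mk, AddHom.coe_mk, hf] using
    ((φ k).continuous.tendsto x).comp hu

lemma le_mul_infDist_of_forall {α : Type*} [PseudoMetricSpace α] {s : Set α} {x : α} {r K : ℝ}
    (hs : s.Nonempty) (hK : 0 ≤ K) (h : ∀ y ∈ s, r ≤ K * dist x y) : r ≤ K * infDist x s := by
  have := hs.to_subtype
  rw [infDist_eq_iInf, Real.mul_iInf_of_nonneg hK]
  exact le_ciInf fun y => h y y.2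

section Galerkin

variable {𝕜 V : Type*} [RCLike 𝕜] [NormedAddCommGroup V] [InnerProductSpace 𝕜 V]
  {a : V →L[𝕜] V →L[𝕜] 𝕜} {M β : ℝ}

lemma mul_norm_nonneg_of_bound (hbound : ∀ u v, ‖a u v‖ ≤ M * ‖u‖ * ‖v‖) (u : V) :
    0 ≤ M * ‖u‖ := by
  rcases eq_or_ne u 0 with rfl | hu
  · simp
  nlinarith [norm_nonneg (a u u), hbound u u, norm_pos_iff.2 hu]

lemma mul_norm_le_of_infSup_s15 {S : Submodule 𝕜 V} {z : V} {K : ℝ} (hK : 0 ≤ K)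
    (hz : β * ‖z‖ ≤ sSup {c : ℝ | ∃ v ∈ S, ‖v‖ = 1 ∧ c = ‖a z v‖})
    (h : ∀ v ∈ S, ‖a z v‖ ≤ K * ‖v‖) : β * ‖z‖ ≤ K :=
  hz.trans <| Real.sSup_le (fun _ ⟨v, hv, hv1, hc⟩ => hc ▸ by simpa [hv1] using h v hv) hK

lemma le_of_infSup_of_tendsto_infDist [Nontrivial V] (hbound : ∀ u v, ‖a u v‖ ≤ M * ‖u‖ * ‖v‖)
    {Vn : ℕ → Submodule 𝕜 V}
    (happrox : ∀ v, Tendsto (fun n => infDist v (Vn n : Set V)) atTop (nhds 0))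
    (hBNB : ∀ n, ∀ u ∈ Vn n, β * ‖u‖ ≤ sSup {c : ℝ | ∃ v ∈ Vn n, ‖v‖ = 1 ∧ c = ‖a u v‖}) :
    β ≤ M := by
  obtain ⟨y, hy⟩ := exists_ne (0 : V)
  obtain ⟨m, hm⟩ := ((happrox y).eventually_lt_const (norm_pos_iff.2 hy)).exists
  obtain ⟨x, hx, hxy⟩ := (infDist_lt_iff ⟨0, (Vn m).zero_mem⟩).1 hm
  have hx0 : 0 < ‖x‖ := norm_pos_iff.2 fun h => by simp [h] at hxy
  refine le_of_mul_le_mul_right ?_ hx0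
  exact mul_norm_le_of_infSup_s15 (mul_norm_nonneg_of_bound hbound x) (hBNB m x hx)
    fun v _ => hbound x v

lemma norm_sub_le_div_mul_infDist_of_galerkin (hbound : ∀ u v, ‖a u v‖ ≤ M * ‖u‖ * ‖v‖)
    (hβ : 0 < β) (hβM : β ≤ M) {S : Submodule 𝕜 V}
    (hBNB : ∀ u ∈ S, β * ‖u‖ ≤ sSup {c : ℝ | ∃ v ∈ S, ‖v‖ = 1 ∧ c = ‖a u v‖})
    {u un : V} (hun : un ∈ S) (horth : ∀ χ ∈ S, a (u - un) χ = 0) :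
    ‖u - un‖ ≤ M / β * infDist u S := by
  have hM : 0 ≤ M := hβ.le.trans hβM
  refine le_mul_infDist_of_forall ⟨0, S.zero_mem⟩ (div_nonneg hM hβ.le) fun χ hχ => ?_
  rw [dist_eq_norm, ← sub_add_sub_cancel u un χ, add_comm]
  refine norm_le_mul_norm_add_of_forall_ofReal_smul (𝕜 := 𝕜) ((one_le_div hβ).2 hβM) _ _
    fun t => ?_
  have hz : (t : 𝕜) • (un - χ) ∈ S := S.smul_mem _ (S.sub_mem hun hχ)
  rw [div_mul_eq_mul_div, le_div_iff₀ hβ, mul_comm _ β]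
  refine mul_norm_le_of_infSup_s15 (mul_nonneg hM (norm_nonneg _)) (hBNB _ hz) fun v hv => ?_
  calc ‖a ((t : 𝕜) • (un - χ)) v‖ = ‖a ((t : 𝕜) • (un - χ) - (u - un)) v‖ := by
        rw [map_sub, sub_apply, horth v hv, sub_zero]
    _ ≤ M * ‖u - un - (t : 𝕜) • (un - χ)‖ * ‖v‖ := norm_sub_rev (u - un) _ ▸ hbound _ v

lemma norm_apply_le_mul_infDist_of_orthogonal (hbound : ∀ u v, ‖a u v‖ ≤ M * ‖u‖ * ‖v‖)
    {S : Submodule 𝕜 V} {d : V} (horth : ∀ χ ∈ S, a d χ = 0) (w : V) :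
    ‖a d w‖ ≤ M * ‖d‖ * infDist w S := by
  refine le_mul_infDist_of_forall ⟨0, S.zero_mem⟩ (mul_norm_nonneg_of_bound hbound d)
    fun χ hχ => ?_
  simpa [horth χ hχ, dist_eq_norm] using hbound d (w - χ)

lemma le_mul_of_orthogonal_of_dual (hbound : ∀ u v, ‖a u v‖ ≤ M * ‖u‖ * ‖v‖)
    {S : Submodule 𝕜 V} {d w : V} (horth : ∀ χ ∈ S, a d χ = 0) {r γ : ℝ} (hr : 0 < r)
    (hw : ‖a d w‖ = r * r) (hdist : infDist w S ≤ γ * r) : r ≤ M * ‖d‖ * γ := by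
  refine le_of_mul_le_mul_right ?_ hr
  calc r * r = ‖a d w‖ := hw.symm
    _ ≤ M * ‖d‖ * (γ * r) := (norm_apply_le_mul_infDist_of_orthogonal hbound horth w).trans
        (mul_le_mul_of_nonneg_left hdist (mul_norm_nonneg_of_bound hbound d))
    _ = M * ‖d‖ * γ * r := by ring

end Galerkin

section ApproxGap

variable {𝕜 X V : Type*} [RCLike 𝕜] [NormedAddCommGroup X] [NormedSpace 𝕜 X]
  [NormedAddCommGroup V] [NormedSpace 𝕜 V]

/-- The paper's `γ(S)` for a solution operator `T`. As an `sSup` in `ℝ` it is `0` when the set is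
unbounded, so it only means something for bounded `T`. -/
noncomputable def approxGap (T : X → V) (S : Set V) : ℝ :=
  sSup {c : ℝ | ∃ g : X, ‖g‖ = 1 ∧ c = infDist (T g) S}

lemma approxGap_nonneg (T : X → V) (S : Set V) : 0 ≤ approxGap T S :=
  Real.sSup_nonneg fun _ ⟨_, _, hc⟩ => hc ▸ infDist_nonneg

lemma infDist_smul_le (S : Submodule 𝕜 V) (c : 𝕜) (x : V) :
    infDist (c • x) S ≤ ‖c‖ * infDist x S := by
  rcases eq_or_ne c 0 with rfl | hc
  · simp [infDist_zero_of_mem S.zero_mem]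
  rw [← infDist_smul₀ hc]
  exact infDist_le_infDist_of_subset (fun _ ⟨y, hy, hxy⟩ => hxy ▸ S.smul_mem c hy)
    ⟨0, 0, S.zero_mem, smul_zero c⟩

lemma infDist_le_approxGap_mul_norm (T : X →L[𝕜] V) (S : Submodule 𝕜 V) (x : X) :
    infDist (T x) S ≤ approxGap T S * ‖x‖ := by
  rcases eq_or_ne x 0 with rfl | hx
  · simp [infDist_zero_of_mem S.zero_mem]
  have hxpos : 0 < ‖x‖ := norm_pos_iff.2 hx
  set g : X := ((‖x‖⁻¹ : ℝ) : 𝕜) • x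
  have hg : ‖g‖ = 1 := by
    rw [norm_smul, RCLike.norm_ofReal, abs_inv, abs_norm, inv_mul_cancel₀ hxpos.ne']
  have hxg : x = ((‖x‖ : ℝ) : 𝕜) • g := by
    rw [smul_smul, ← RCLike.ofReal_mul, mul_inv_cancel₀ hxpos.ne', RCLike.ofReal_one, one_smul]
  have hbdd : BddAbove {c : ℝ | ∃ g : X, ‖g‖ = 1 ∧ c = infDist (T g) S} :=
    ⟨‖T‖, fun _ ⟨g, hg, hc⟩ => hc ▸ (infDist_le_dist_of_mem S.zero_mem).trans
      (by simpa [hg] using T.le_opNorm g)⟩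
  calc infDist (T x) S = infDist (((‖x‖ : ℝ) : 𝕜) • T g) S := by rw [← map_smul, ← hxg]
    _ ≤ ‖((‖x‖ : ℝ) : 𝕜)‖ * infDist (T g) S := infDist_smul_le S _ _
    _ ≤ approxGap T S * ‖x‖ := by
        rw [RCLike.norm_ofReal, abs_norm, mul_comm]
        exact mul_le_mul_of_nonneg_right (le_csSup hbdd ⟨g, hg, rfl⟩) (norm_nonneg x)

end ApproxGap

theorem stmt15_general {𝕜 : Type*} [RCLike 𝕜]
    {V H X : Type*}
    [NormedAddCommGroup V] [InnerProductSpace 𝕜 V] [CompleteSpace V]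
    [NormedAddCommGroup H] [InnerProductSpace 𝕜 H] [CompleteSpace H]
    [NormedAddCommGroup X] [NormedSpace 𝕜 X]
    -- the Gelfand triple `V ↪ H ↪ V'`
    (i : V →L[𝕜] H)
    (j : H →L[𝕜] StrongDual 𝕜 V)
    (hj : ∀ (h : H) (v : V), j h v = inner 𝕜 h (i v))
    -- the continuous embedding `X ↪ V'`
    (e : X →L[𝕜] StrongDual 𝕜 V)
    -- the form, its bound and the uniform inf-sup condition
    (a : V →L[𝕜] V →L[𝕜] 𝕜) (M β : ℝ) (hM : 0 < M) (hβ : 0 < β)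
    (hbound : ∀ u v, ‖a u v‖ ≤ M * ‖u‖ * ‖v‖)
    (Vn : ℕ → Subspace 𝕜 V)
    (happrox : ∀ v : V, Tendsto (fun n => infDist v (Vn n : Set V)) atTop (nhds 0))
    (hBNB : ∀ n, ∀ u ∈ Vn n,
      β * ‖u‖ ≤ sSup {c : ℝ | ∃ v ∈ Vn n, ‖v‖ = 1 ∧ c = ‖a u v‖})
    -- the inverses of the associated operator `𝒜` and of its adjoint `𝒜*`
    (Ainv Astarinv : StrongDual 𝕜 V → V)
    (hAinv : ∀ f : StrongDual 𝕜 V, ∀ v : V, a (Ainv f) v = f v)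
    (hAstarinv : ∀ f : StrongDual 𝕜 V, ∀ v : V,
      a v (Astarinv f) = starRingEnd 𝕜 (f v)) :
    ∀ L : X, ∀ u : V, (∀ v : V, a u v = e L v) →
      ∀ n, ∀ un ∈ Vn n, (∀ χ ∈ Vn n, a un χ = e L χ) →
        ‖i u - i un‖ ≤ (M ^ 2 / β) *
          sSup {c : ℝ | ∃ g : X, ‖g‖ = 1 ∧ c = infDist (Ainv (e g)) (Vn n : Set V)} *
          sSup {c : ℝ | ∃ h : H, ‖h‖ = 1 ∧ c = infDist (Astarinv (j h)) (Vn n : Set V)} *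
          ‖L‖ := by
  intro L u hu n un hun hgal
  have sep_left : ∀ z, (∀ v, a z v = 0) → z = 0 := fun z hz =>
    SeparatingDual.eq_zero_of_forall_dual_eq_zero fun f => by
      simpa [hz] using (hAstarinv f z).symm
  have sep_right : ∀ z, (∀ v, a v z = 0) → z = 0 := fun z hz =>
    SeparatingDual.eq_zero_of_forall_dual_eq_zero fun f => by rw [← hAinv f z, hz]
  obtain ⟨A, rfl⟩ := exists_continuousLinearMap_of_separating (fun v => a.flip v) sep_left Ainv
    (fun v => ContinuousLinearMap.apply 𝕜 𝕜 v) fun v f => hAinv f v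
  obtain ⟨T, hT⟩ := exists_continuousLinearMap_of_separating a sep_right (fun h => Astarinv (j h))
    (fun v => innerSL 𝕜 (i v)) fun v h => by
      rw [hAstarinv, hj, inner_conj_symm, innerSL_apply_apply]
  change _ ≤ M ^ 2 / β * approxGap (A.comp e) (Vn n) *
    approxGap (fun h => Astarinv (j h)) (Vn n) * _
  rw [← hT, ← map_sub]
  set d := u - un
  by_cases hd : i d = 0
  · rw [hd, norm_zero]
    have := approxGap_nonneg (A.comp e) (Vn n)
    have := approxGap_nonneg T (Vn n)
    positivity
  have : Nontrivial V := nontrivial_of_ne d 0 fun h => hd (by rw [h, map_zero])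
  have horth : ∀ χ ∈ Vn n, a d χ = 0 := fun χ hχ => by simp [d, hu, hgal χ hχ]
  have hu' : u = A (e L) := sub_eq_zero.1 (sep_left _ fun v => by simp [hu, hAinv])
  have hdual : ‖i d‖ ≤ M * ‖d‖ * approxGap T (Vn n) := by
    refine le_mul_of_orthogonal_of_dual hbound horth (norm_pos_iff.2 hd) ?_
      (infDist_le_approxGap_mul_norm T _ _)
    rw [hT, hAstarinv, hj, inner_conj_symm, inner_self_eq_norm_sq_to_K, norm_pow,
      RCLike.norm_ofReal, abs_norm, sq]
  have hquasi : ‖d‖ ≤ M / β * (approxGap (A.comp e) (Vn n) * ‖L‖) :=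
    (norm_sub_le_div_mul_infDist_of_galerkin hbound hβ
      (le_of_infSup_of_tendsto_infDist hbound happrox hBNB) (hBNB n) hun horth).trans
      (mul_le_mul_of_nonneg_left (hu' ▸ infDist_le_approxGap_mul_norm (A.comp e) _ _)
        (div_nonneg hM.le hβ.le))
  have hγ := approxGap_nonneg T (Vn n)
  calc ‖i d‖ ≤ M * ‖d‖ * approxGap T (Vn n) := hdual
    _ ≤ M * (M / β * (approxGap (A.comp e) (Vn n) * ‖L‖)) * approxGap T (Vn n) := by gcongr
    _ = _ := by ring

/-- generalized Aubin–Nitsche: in a Gelfand triple `V ↪ H ↪ V'` with a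
Banach space `X ↪ V'` of data, under the uniform inf-sup condition, the Galerkin error
measured in `H` satisfies `‖u − uₙ‖_H ≤ (M²/β)·γₙ(X)·γₙ*(H)·‖L‖_X`. -/
theorem stmt15 {𝕜 : Type*} [RCLike 𝕜]
    {V H X : Type*}
    [NormedAddCommGroup V] [InnerProductSpace 𝕜 V] [CompleteSpace V]
    [TopologicalSpace.SeparableSpace V]
    [NormedAddCommGroup H] [InnerProductSpace 𝕜 H] [CompleteSpace H]
    [TopologicalSpace.SeparableSpace H]
    [NormedAddCommGroup X] [NormedSpace 𝕜 X]
    -- the Gelfand triple `V ↪ H ↪ V'`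
    (i : V →L[𝕜] H) (hi : Function.Injective i) (hiDense : DenseRange i)
    (j : H →L[𝕜] StrongDual 𝕜 V) (hjInj : Function.Injective j)
    (hj : ∀ (h : H) (v : V), j h v = inner 𝕜 h (i v))
    -- the continuous embedding `X ↪ V'`
    (e : X →L[𝕜] StrongDual 𝕜 V) (heInj : Function.Injective e)
    -- the form, its bound and the uniform inf-sup condition
    (a : V →L[𝕜] V →L[𝕜] 𝕜) (M β : ℝ) (hM : 0 < M) (hβ : 0 < β)
    (hbound : ∀ u v, ‖a u v‖ ≤ M * ‖u‖ * ‖v‖)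
    (Vn : ℕ → Subspace 𝕜 V) (hfin : ∀ n, FiniteDimensional 𝕜 (Vn n))
    (happrox : ∀ v : V, Tendsto (fun n => infDist v (Vn n : Set V)) atTop (nhds 0))
    (hBNB : ∀ n, ∀ u ∈ Vn n,
      β * ‖u‖ ≤ sSup {c : ℝ | ∃ v ∈ Vn n, ‖v‖ = 1 ∧ c = ‖a u v‖})
    -- the inverses of the associated operator `𝒜` and of its adjoint `𝒜*`
    (Ainv Astarinv : StrongDual 𝕜 V → V)
    (hAinv : ∀ f : StrongDual 𝕜 V, ∀ v : V, a (Ainv f) v = f v)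
    (hAstarinv : ∀ f : StrongDual 𝕜 V, ∀ v : V,
      a v (Astarinv f) = starRingEnd 𝕜 (f v)) :
    ∀ L : X, ∀ u : V, (∀ v : V, a u v = e L v) →
      ∀ n, ∀ un ∈ Vn n, (∀ χ ∈ Vn n, a un χ = e L χ) →
        ‖i u - i un‖ ≤ (M ^ 2 / β) *
          sSup {c : ℝ | ∃ g : X, ‖g‖ = 1 ∧ c = infDist (Ainv (e g)) (Vn n : Set V)} *
          sSup {c : ℝ | ∃ h : H, ‖h‖ = 1 ∧ c = infDist (Astarinv (j h)) (Vn n : Set V)} *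
          ‖L‖ :=
  stmt15_general i j hj e a M β hM hβ hbound Vn happrox hBNB Ainv Astarinv hAinv hAstarinv
end

section
/- Let V ↪ V' via an invertible operator 𝒜 associated to a form a satisfying the uniform inf-sup condition, let X ↪ V' be a continuously embedded Banach space, and define γ_n(X) = sup_{f ∈ X, ‖f‖_X=1} dist(𝒜⁻¹f, V_n) for an approximating sequence (V_n) of the Hilbert space V. Then γ_n(X) → 0 as n → ∞ if and only if the embedding X ↪ V' is compact. -/
/-!
Write `T = 𝒜⁻¹ ∘ j` and `Pₙ` for the orthogonal projection onto `Vₙ`. Since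
`‖T f - Pₙ T f‖ = dist (T f, Vₙ)`, the quantity `γₙ(X)` is the operator norm `‖T - Pₙ T‖`.
If it tends to `0`, then `T` is a norm limit of finite-rank operators, hence compact.
Conversely, the functions `dist (·, Vₙ)` are `1`-Lipschitz and tend to `0` pointwise, so they tend
to `0` uniformly on the compact closure of the image of the unit ball under a compact `T`.
Finally `j = 𝒜 T` is compact exactly when `T` is.
-/

open Metric Filter Topology

theorem Metric.tendstoUniformlyOn_infDist_of_tendsto {α ι : Type*} [PseudoMetricSpace α]
    {l : Filter ι} {s : ι → Set α} (h : ∀ x, Tendsto (fun i => infDist x (s i)) l (𝓝 0))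
    {K : Set α} (hK : IsCompact K) :
    TendstoUniformlyOn (fun i x => infDist x (s i)) 0 l K := by
  have hequi : Equicontinuous fun i x => infDist x (s i) :=
    (LipschitzWith.uniformEquicontinuous _ 1 fun i => lipschitz_infDist_pt (s i)).equicontinuous
  have hcpt := (EquicontinuousOn.tendsto_uniformOnFun_iff_pi (𝔖 := {K | IsCompact K})
    (fun _ hK => hK) (Set.eq_univ_of_forall fun x => ⟨{x}, isCompact_singleton, rfl⟩)
    (fun K _ => hequi.equicontinuousOn K) l 0).2 (tendsto_pi_nhds.2 h)
  exact UniformOnFun.tendsto_iff_tendstoUniformlyOn.1 hcpt K hK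

theorem ContinuousLinearEquiv.isCompactOperator_comp_iff {R₂ R₃ : Type*} [Semiring R₂]
    [Semiring R₃] {σ₂₃ : R₂ →+* R₃} {σ₃₂ : R₃ →+* R₂} [RingHomInvPair σ₂₃ σ₃₂]
    [RingHomInvPair σ₃₂ σ₂₃] {M₁ M₂ M₃ : Type*} [TopologicalSpace M₁] [AddCommMonoid M₁]
    [TopologicalSpace M₂] [AddCommMonoid M₂] [Module R₂ M₂]
    [TopologicalSpace M₃] [AddCommMonoid M₃] [Module R₃ M₃]
    (e : M₂ ≃SL[σ₂₃] M₃) {f : M₁ → M₂} :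
    IsCompactOperator (e ∘ f) ↔ IsCompactOperator f := by
  refine ⟨fun h => ?_, fun h => h.continuous_comp e.continuous⟩
  simpa [Function.comp_def] using h.continuous_comp e.symm.continuous

namespace Submodule

variable {𝕜 V X : Type*} [RCLike 𝕜] [NormedAddCommGroup V] [InnerProductSpace 𝕜 V]
  [NormedAddCommGroup X] [NormedSpace 𝕜 X]

theorem infDist_eq_norm_sub_starProjection (K : Submodule 𝕜 V) [K.HasOrthogonalProjection]
    (v : V) : infDist v K = ‖v - K.starProjection v‖ := by
  rw [starProjection_minimal, infDist_eq_iInf]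
  simp only [dist_eq_norm]
  rfl

theorem norm_sub_starProjection_comp_apply (K : Submodule 𝕜 V) [K.HasOrthogonalProjection]
    (T : X →L[𝕜] V) (f : X) : ‖(T - K.starProjection ∘L T) f‖ = infDist (T f) K :=
  (K.infDist_eq_norm_sub_starProjection (T f)).symm

theorem sSup_infDist_sphere_eq_norm_sub_starProjection_comp (K : Submodule 𝕜 V)
    [K.HasOrthogonalProjection] (T : X →L[𝕜] V) :
    sSup {c : ℝ | ∃ f : X, ‖f‖ = 1 ∧ c = infDist (T f) K} = ‖T - K.starProjection ∘L T‖ := by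
  rw [← ContinuousLinearMap.sSup_sphere_eq_norm]
  congr 1
  ext c
  simp only [Set.mem_ofPred_eq, Set.mem_image, mem_sphere_zero_iff_norm,
    norm_sub_starProjection_comp_apply, eq_comm]

theorem isCompactOperator_starProjection_comp (K : Submodule 𝕜 V) [FiniteDimensional 𝕜 K]
    (T : X →L[𝕜] V) : IsCompactOperator (K.starProjection ∘L T) :=
  (isCompactOperator_of_locallyCompactSpace_dom (K.orthogonalProjectionOnto ∘L T)).clm_comp
    K.subtypeL

theorem isCompactOperator_of_tendsto_norm_sub_starProjection_comp [CompleteSpace V]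
    {ι : Type*} {l : Filter ι} [l.NeBot] (W : ι → Submodule 𝕜 V)
    [∀ i, FiniteDimensional 𝕜 (W i)] {T : X →L[𝕜] V}
    (h : Tendsto (fun i => ‖T - (W i).starProjection ∘L T‖) l (𝓝 0)) :
    IsCompactOperator T := by
  refine isCompactOperator_of_tendsto (l := l) (F := fun i => (W i).starProjection ∘L T) ?_
    (.of_forall fun i => (W i).isCompactOperator_starProjection_comp T)
  rw [tendsto_iff_norm_sub_tendsto_zero]
  simpa only [norm_sub_rev] using h

theorem _root_.IsCompactOperator.tendsto_norm_sub_starProjection_comp {ι : Type*}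
    {l : Filter ι} (W : ι → Submodule 𝕜 V) [∀ i, (W i).HasOrthogonalProjection]
    (hW : ∀ v : V, Tendsto (fun i => infDist v (W i)) l (𝓝 0)) {T : X →L[𝕜] V}
    (hT : IsCompactOperator T) :
    Tendsto (fun i => ‖T - (W i).starProjection ∘L T‖) l (𝓝 0) := by
  have hK : IsCompact (closure (T '' closedBall 0 1)) := by
    simpa using hT.isCompact_closure_image_closedBall (𝕜₁ := 𝕜) (f := (T : X →ₗ[𝕜] V)) 1
  have hunif := Metric.tendstoUniformlyOn_iff.1 (tendstoUniformlyOn_infDist_of_tendsto hW hK)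
  refine Metric.tendsto_nhds.2 fun ε hε => ?_
  filter_upwards [hunif (ε / 2) (half_pos hε)] with i hi
  have hle : ‖T - (W i).starProjection ∘L T‖ ≤ ε / 2 := by
    rw [← ContinuousLinearMap.sSup_unitClosedBall_eq_norm]
    refine Real.sSup_le ?_ (half_pos hε).le
    rintro - ⟨f, hf, rfl⟩
    have := hi (T f) (subset_closure ⟨f, hf, rfl⟩)
    rw [Pi.zero_apply, dist_zero_left, Real.norm_of_nonneg infDist_nonneg] at this
    exact (norm_sub_starProjection_comp_apply _ T f).trans_le this.le
  rw [Real.dist_eq, sub_zero, abs_norm]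
  linarith

end Submodule

theorem stmt16_general {𝕜 : Type*} [RCLike 𝕜]
    {V X : Type*}
    [NormedAddCommGroup V] [InnerProductSpace 𝕜 V] [CompleteSpace V]
    [NormedAddCommGroup X] [NormedSpace 𝕜 X]
    (A : V ≃L[𝕜] StrongDual 𝕜 V)
    (j : X →L[𝕜] StrongDual 𝕜 V)
    (Vn : ℕ → Subspace 𝕜 V) (hfin : ∀ n, FiniteDimensional 𝕜 (Vn n))
    (happrox : ∀ v : V, Tendsto (fun n => infDist v (Vn n : Set V)) atTop (nhds 0)) :
    Tendsto (fun n =>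
        sSup {c : ℝ | ∃ f : X, ‖f‖ = 1 ∧ c = infDist (A.symm (j f)) (Vn n : Set V)})
      atTop (nhds 0) ↔ IsCompactOperator j := by
  let T : X →L[𝕜] V := (A.symm : StrongDual 𝕜 V →L[𝕜] V) ∘L j
  have hγ : ∀ n, sSup {c : ℝ | ∃ f : X, ‖f‖ = 1 ∧ c = infDist (T f) (Vn n : Set V)} =
      ‖T - (Vn n).starProjection ∘L T‖ :=
    fun n => (Vn n).sSup_infDist_sphere_eq_norm_sub_starProjection_comp T
  change Tendsto (fun n => sSup {c : ℝ | ∃ f : X, ‖f‖ = 1 ∧ c = infDist (T f) (Vn n)}) _ _ ↔ _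
  rw [funext hγ, ← A.symm.isCompactOperator_comp_iff]
  exact ⟨Submodule.isCompactOperator_of_tendsto_norm_sub_starProjection_comp Vn,
    fun hT => hT.tendsto_norm_sub_starProjection_comp Vn happrox⟩

/-- `γₙ(X) → 0` as `n → ∞` iff the embedding `X ↪ V'` is compact. -/
theorem stmt16 {𝕜 : Type*} [RCLike 𝕜]
    {V X : Type*}
    [NormedAddCommGroup V] [InnerProductSpace 𝕜 V] [CompleteSpace V]
    [TopologicalSpace.SeparableSpace V]
    [NormedAddCommGroup X] [NormedSpace 𝕜 X]
    (A : V ≃L[𝕜] StrongDual 𝕜 V)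
    (j : X →L[𝕜] StrongDual 𝕜 V) (hjInj : Function.Injective j)
    (Vn : ℕ → Subspace 𝕜 V) (hfin : ∀ n, FiniteDimensional 𝕜 (Vn n))
    (happrox : ∀ v : V, Tendsto (fun n => infDist v (Vn n : Set V)) atTop (nhds 0)) :
    Tendsto (fun n =>
        sSup {c : ℝ | ∃ f : X, ‖f‖ = 1 ∧ c = infDist (A.symm (j f)) (Vn n : Set V)})
      atTop (nhds 0) ↔ IsCompactOperator j :=
  stmt16_general A j Vn hfin happrox
end

section
/- Let U, V be separable reflexive Banach spaces and a : U × V → 𝕂 a continuous sesquilinear form whose associated operator 𝒜 : U → V' is invertible. If U admits a sequence of finite-rank projections (P_n) with P_n u → u for all u ∈ U and P_m P_n = P_n P_m = P_m for n ≥ m (a finite-dimensional Schauder decomposition), then there exist approximating sequences (U_n) of U and (V_n) of V such that the associated Petrov–Galerkin approximation converges: for each L ∈ V' the discrete solutions u_n ∈ U_n exist uniquely and satisfy ‖u − u_n‖ ≤ γ · dist(u, U_n) for a constant γ independent of n and L. -/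
open Metric Filter Topology

/-!
Take the ranges of the `Pₙ` as trial spaces. Since `𝒜 : U → V'` is invertible and `V` is
reflexive, there is an isomorphism `J : U' ≃ V` with `a w (J f) = f w`; take as test spaces the
images under `J` of the functionals `g ∘ Pₙ`. Testing against `J (g ∘ Pₙ)` computes `g (Pₙ ·)`,
so the Petrov–Galerkin solution is exactly `Pₙ u`, and quasi-optimality with
`γ = 1 + supₙ ‖Pₙ‖` follows from the uniform boundedness principle.

The test spaces approximate `V` because the functionals `g ∘ Pₙ` are dense in `U'`: a functional
on `U'` vanishing on all of them is, by reflexivity of `U`, evaluation at some `x` with `Pₙ x = 0`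
for all `n`, and then `x = lim Pₙ x = 0`.
-/

theorem Metric.tendsto_infDist_of_monotone_of_dense {X : Type*} [PseudoMetricSpace X]
    {s : ℕ → Set X} (hs : Monotone s) (hd : Dense (⋃ n, s n)) (x : X) :
    Tendsto (fun n => infDist x (s n)) atTop (𝓝 0) := by
  rw [Metric.tendsto_atTop]
  intro ε hε
  obtain ⟨y, hxy, hy⟩ := Metric.dense_iff.1 hd x ε hε
  obtain ⟨N, hyN⟩ := Set.mem_iUnion.1 hy
  refine ⟨N, fun n hn => ?_⟩
  rw [Real.dist_eq, sub_zero, abs_of_nonneg infDist_nonneg]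
  exact (infDist_le_dist_of_mem (hs hn hyN)).trans_lt (by rwa [dist_comm, ← mem_ball])

theorem dense_iUnion_range_of_tendsto {X : Type*} [TopologicalSpace X] {P : ℕ → X → X}
    (hP : ∀ x, Tendsto (fun n => P n x) atTop (𝓝 x)) : Dense (⋃ n, Set.range (P n)) := fun x =>
  mem_closure_of_tendsto (hP x) (.of_forall fun n => Set.mem_iUnion_of_mem n ⟨x, rfl⟩)

section Projection

variable {𝕜 E : Type*} [NontriviallyNormedField 𝕜] [SeminormedAddCommGroup E] [NormedSpace 𝕜 E]

theorem ContinuousLinearMap.norm_sub_apply_le_mul_infDist {P : E →L[𝕜] E}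
    (hP : IsIdempotentElem P) (u : E) :
    ‖u - P u‖ ≤ (1 + ‖P‖) * infDist u (Set.range P) := by
  rw [← div_le_iff₀' (by positivity), le_infDist (Set.range_nonempty P)]
  rintro _ ⟨x, rfl⟩
  rw [div_le_iff₀' (by positivity), dist_eq_norm]
  have hfix : P (P x) = P x := congr($hP x)
  calc ‖u - P u‖ = ‖(u - P x) - P (u - P x)‖ := by rw [map_sub, hfix]; abel_nf
    _ ≤ ‖u - P x‖ + ‖P‖ * ‖u - P x‖ := (norm_sub_le _ _).trans (by gcongr; exact P.le_opNorm _)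
    _ = (1 + ‖P‖) * ‖u - P x‖ := by ring

theorem ContinuousLinearMap.exists_forall_norm_le_of_tendsto {F : Type*} [CompleteSpace E]
    [SeminormedAddCommGroup F] [NormedSpace 𝕜 F] {P : ℕ → E →L[𝕜] F} {f : E → F}
    (hP : ∀ x, Tendsto (fun n => P n x) atTop (𝓝 (f x))) : ∃ C, ∀ n, ‖P n‖ ≤ C :=
  banach_steinhaus fun x => by
    obtain ⟨b, hb⟩ := (hP x).norm.bddAbove_range
    exact ⟨b, fun n => hb (Set.mem_range_self n)⟩

end Projection

section Dual

variable {𝕜 E F : Type*} [RCLike 𝕜] [NormedAddCommGroup E] [NormedSpace 𝕜 E]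
  [NormedAddCommGroup F] [NormedSpace 𝕜 F]

theorem Submodule.exists_dual_forall_eq_zero_and_ne_zero {S : Submodule 𝕜 E}
    [IsClosed (S : Set E)] {x : E} (hx : x ∉ S) :
    ∃ f : StrongDual 𝕜 E, (∀ y ∈ S, f y = 0) ∧ f x ≠ 0 := by
  obtain ⟨f, hf⟩ := SeparatingDual.exists_ne_zero (R := 𝕜) (x := S.mkQL x) (by simpa using hx)
  exact ⟨f.comp S.mkQL, fun y hy => by simp [(Submodule.Quotient.mk_eq_zero S).2 hy], hf⟩

theorem StrongDual.dense_of_forall_apply_eq_zero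
    (hE : Function.Surjective (NormedSpace.inclusionInDoubleDual 𝕜 E))
    {S : Submodule 𝕜 (StrongDual 𝕜 E)} (hS : ∀ x : E, (∀ f ∈ S, f x = 0) → x = 0) :
    Dense (S : Set (StrongDual 𝕜 E)) := by
  rw [Submodule.dense_iff_topologicalClosure_eq_top, Submodule.eq_top_iff']
  by_contra! ⟨φ, hφ⟩
  have : IsClosed (S.topologicalClosure : Set (StrongDual 𝕜 E)) := S.isClosed_topologicalClosure
  obtain ⟨ξ, hξS, hξφ⟩ := Submodule.exists_dual_forall_eq_zero_and_ne_zero hφ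
  obtain ⟨x, rfl⟩ := hE ξ
  exact hξφ (by simp [hS x fun f hf => hξS f (S.le_topologicalClosure hf)])

namespace ContinuousLinearMap

/-- For `P x = ∑ₖ φₖ(x) bₖ` this is the span of the `φₖ`. -/
def dualRange (P : E →L[𝕜] F) : Submodule 𝕜 (StrongDual 𝕜 E) :=
  LinearMap.range (precomp 𝕜 P : StrongDual 𝕜 F →L[𝕜] StrongDual 𝕜 E).toLinearMap

theorem mem_dualRange {P : E →L[𝕜] F} {f : StrongDual 𝕜 E} :
    f ∈ P.dualRange ↔ ∃ g : StrongDual 𝕜 F, g.comp P = f :=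
  Iff.rfl

theorem comp_mem_dualRange (P : E →L[𝕜] F) (g : StrongDual 𝕜 F) : g.comp P ∈ P.dualRange :=
  ⟨g, rfl⟩

theorem finiteDimensional_dualRange (P : E →L[𝕜] F)
    [FiniteDimensional 𝕜 (LinearMap.range (P : E →ₗ[𝕜] F))] :
    FiniteDimensional 𝕜 P.dualRange := by
  set W := LinearMap.range (P : E →ₗ[𝕜] F)
  let Q : E →L[𝕜] W := P.codRestrict W fun x => LinearMap.mem_range_self _ x
  refine Submodule.finiteDimensional_of_le (S₂ := LinearMap.range
    (precomp 𝕜 Q : (W →L[𝕜] 𝕜) →L[𝕜] StrongDual 𝕜 E).toLinearMap) ?_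
  rintro _ ⟨f, rfl⟩
  exact ⟨f.comp W.subtypeL, rfl⟩

theorem dualRange_mono {P R : E →L[𝕜] E} (h : P.comp R = P) : P.dualRange ≤ R.dualRange := by
  rintro _ ⟨g, rfl⟩
  exact ⟨g.comp P, by simp [comp_assoc, h]⟩

end ContinuousLinearMap

theorem StrongDual.dense_iUnion_dualRange
    (hE : Function.Surjective (NormedSpace.inclusionInDoubleDual 𝕜 E)) {P : ℕ → E →L[𝕜] E}
    (hP : ∀ x, Tendsto (fun n => P n x) atTop (𝓝 x)) (hmono : Monotone fun n => (P n).dualRange) :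
    Dense (⋃ n, ((P n).dualRange : Set (StrongDual 𝕜 E))) := by
  rw [← Submodule.coe_iSup_of_directed _ hmono.directed_le]
  refine StrongDual.dense_of_forall_apply_eq_zero hE fun x hx => ?_
  have hPx : ∀ n, P n x = 0 := fun n => SeparatingDual.eq_zero_of_forall_dual_eq_zero (R := 𝕜)
    fun g => hx _ (Submodule.mem_iSup_of_mem n ((P n).comp_mem_dualRange g))
  exact tendsto_nhds_unique (hP x) (by simp [hPx])

theorem ContinuousLinearMap.exists_dual_equiv_apply_eq [CompleteSpace E]
    (hF : Function.Surjective (NormedSpace.inclusionInDoubleDual 𝕜 F))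
    (a : E →L[𝕜] F →L[𝕜] 𝕜) (ha : ∀ L : StrongDual 𝕜 F, ∃! u : E, ∀ v, a u v = L v) :
    ∃ J : StrongDual 𝕜 E ≃L[𝕜] F, ∀ f w, a w (J f) = f w := by
  have hbij : Function.Bijective a := (Function.bijective_iff_existsUnique a).2 fun L => by
    simpa only [ContinuousLinearMap.ext_iff] using ha L
  let A := ContinuousLinearEquiv.ofBijective a (LinearMap.ker_eq_bot.2 hbij.1)
    (LinearMap.range_eq_top.2 hbij.2)
  let ι := (LinearIsometryEquiv.ofSurjective (NormedSpace.inclusionInDoubleDualLi 𝕜) hF)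
    |>.toContinuousLinearEquiv
  refine ⟨(A.arrowCongr (.refl 𝕜 𝕜)).trans ι.symm, fun f w => ?_⟩
  calc a w (ι.symm (A.arrowCongr (.refl 𝕜 𝕜) f))
      = ι (ι.symm (A.arrowCongr (.refl 𝕜 𝕜) f)) (A w) := rfl
    _ = f w := by rw [ι.apply_symm_apply]; simp [ContinuousLinearEquiv.arrowCongr]

theorem petrovGalerkin_iff_eq_apply {a : E →L[𝕜] F →L[𝕜] 𝕜} {J : StrongDual 𝕜 E →ₗ[𝕜] F}
    (hJ : ∀ f w, a w (J f) = f w) {P : E →L[𝕜] E} (hP : IsIdempotentElem P)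
    {L : StrongDual 𝕜 F} {u : E} (hu : ∀ v, a u v = L v) (w : E) :
    (w ∈ LinearMap.range (P : E →ₗ[𝕜] E) ∧ ∀ χ ∈ P.dualRange.map J, a w χ = L χ) ↔
      w = P u := by
  have htest : (∀ χ ∈ P.dualRange.map J, a w χ = L χ) ↔ P w = P u := by
    simp only [Submodule.mem_map, ContinuousLinearMap.mem_dualRange, ← hu]
    rw [SeparatingDual.eq_iff_forall_dual_eq (R := 𝕜)]
    simp [hJ]
  have hfix : P (P u) = P u := congr($hP u)
  rw [htest, LinearMap.IsIdempotentElem.mem_range_iff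
    (ContinuousLinearMap.IsIdempotentElem.toLinearMap hP)]
  constructor
  · rintro ⟨hw, hwu⟩
    exact hw.symm.trans hwu
  · rintro rfl
    exact ⟨hfix, hfix⟩

end Dual

theorem stmt19_general {𝕜 : Type*} [RCLike 𝕜]
    {U V : Type*} [NormedAddCommGroup U] [NormedSpace 𝕜 U] [CompleteSpace U]
    [NormedAddCommGroup V] [NormedSpace 𝕜 V]
    (hUrefl : Function.Bijective (NormedSpace.inclusionInDoubleDual 𝕜 U))
    (hVrefl : Function.Bijective (NormedSpace.inclusionInDoubleDual 𝕜 V))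
    (a : U →L[𝕜] V →L[𝕜] 𝕜)
    -- well-posedness: the associated operator `𝒜 : U → V'` is invertible
    (hwp : ∀ L : StrongDual 𝕜 V, ∃! u : U, ∀ v : V, a u v = L v)
    -- a finite-dimensional Schauder decomposition of `U`
    (P : ℕ → U →L[𝕜] U)
    (hPfin : ∀ n, FiniteDimensional 𝕜 (LinearMap.range (P n : U →ₗ[𝕜] U)))
    (hPtend : ∀ u : U, Tendsto (fun n => P n u) atTop (nhds u))
    (hPcomm : ∀ m n, m ≤ n → (P m).comp (P n) = P m ∧ (P n).comp (P m) = P m) :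
    ∃ (Un : ℕ → Subspace 𝕜 U) (Vn : ℕ → Subspace 𝕜 V) (γ : ℝ), 0 < γ ∧
      (∀ n, FiniteDimensional 𝕜 (Un n)) ∧ (∀ n, FiniteDimensional 𝕜 (Vn n)) ∧
      (∀ u : U, Tendsto (fun n => infDist u (Un n : Set U)) atTop (nhds 0)) ∧
      (∀ v : V, Tendsto (fun n => infDist v (Vn n : Set V)) atTop (nhds 0)) ∧
      ∀ L : StrongDual 𝕜 V,
        (∀ n, ∃! un : U, un ∈ Un n ∧ ∀ χ ∈ Vn n, a un χ = L χ) ∧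
        (∀ u : U, (∀ v : V, a u v = L v) →
          ∀ n, ∀ un ∈ Un n, (∀ χ ∈ Vn n, a un χ = L χ) →
            ‖u - un‖ ≤ γ * infDist u (Un n : Set U)) := by
  have hidem n : IsIdempotentElem (P n) := (hPcomm n n le_rfl).1
  obtain ⟨C, hC⟩ := ContinuousLinearMap.exists_forall_norm_le_of_tendsto hPtend
  obtain ⟨J, hJ⟩ := a.exists_dual_equiv_apply_eq hVrefl.2 hwp
  have hgal := fun (L : StrongDual 𝕜 V) u (hu : ∀ v, a u v = L v) n =>
    petrovGalerkin_iff_eq_apply (J := (J : StrongDual 𝕜 U →ₗ[𝕜] V)) hJ (hidem n) hu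
  have hUmono : Monotone fun n => Set.range (P n) := by
    rintro m n hmn _ ⟨x, rfl⟩
    exact ⟨P m x, congr($((hPcomm m n hmn).2) x)⟩
  have hFmono : Monotone fun n => (P n).dualRange := fun m n hmn =>
    ContinuousLinearMap.dualRange_mono (hPcomm m n hmn).1
  refine ⟨fun n => LinearMap.range (P n : U →ₗ[𝕜] U),
    fun n => (P n).dualRange.map (J : StrongDual 𝕜 U →ₗ[𝕜] V),
    1 + C, by linarith [(norm_nonneg (P 0)).trans (hC 0)], hPfin,
    fun n => haveI := hPfin n; (P n).finiteDimensional_dualRange.map _ _, fun u => ?_,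
    fun v => ?_, fun L => ⟨fun n => ?_, fun u hu n un hun hgalerkin => ?_⟩⟩
  · simpa only [LinearMap.coe_range, ContinuousLinearMap.coe_coe] using
      tendsto_infDist_of_monotone_of_dense hUmono (dense_iUnion_range_of_tendsto hPtend) u
  · refine tendsto_infDist_of_monotone_of_dense (fun m n hmn => ?_) ?_ v
    · simpa using Set.image_mono (f := J) (hFmono hmn)
    · simpa [Set.image_iUnion] using J.surjective.denseRange.dense_image J.continuous
        (StrongDual.dense_iUnion_dualRange hUrefl.2 hPtend hFmono)
  · obtain ⟨u, hu, -⟩ := hwp L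
    exact ⟨P n u, (hgal L u hu n _).2 rfl, fun w hw => (hgal L u hu n w).1 hw⟩
  · rw [(hgal L u hu n un).1 ⟨hun, hgalerkin⟩]
    calc ‖u - P n u‖ ≤ (1 + ‖P n‖) * infDist u (Set.range (P n)) :=
          (P n).norm_sub_apply_le_mul_infDist (hidem n) u
      _ ≤ (1 + C) * infDist u (Set.range (P n)) := by gcongr; exacts [infDist_nonneg, hC n]
      _ = _ := by simp only [LinearMap.coe_range, ContinuousLinearMap.coe_coe]

/-- if the well-posed problem lives on a space `U` admitting a
finite-dimensional Schauder decomposition (a sequence of commuting finite-rank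
projections converging strongly to the identity), then there exist approximating
sequences `(Uₙ)`, `(Vₙ)` for which the Petrov–Galerkin approximation converges. -/
theorem stmt19 {𝕜 : Type*} [RCLike 𝕜]
    {U V : Type*} [NormedAddCommGroup U] [NormedSpace 𝕜 U] [CompleteSpace U]
    [NormedAddCommGroup V] [NormedSpace 𝕜 V] [CompleteSpace V]
    [TopologicalSpace.SeparableSpace U] [TopologicalSpace.SeparableSpace V]
    (hUrefl : Function.Bijective (NormedSpace.inclusionInDoubleDual 𝕜 U))
    (hVrefl : Function.Bijective (NormedSpace.inclusionInDoubleDual 𝕜 V))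
    (a : U →L[𝕜] V →L[𝕜] 𝕜) (M : ℝ)
    (hbound : ∀ u v, ‖a u v‖ ≤ M * ‖u‖ * ‖v‖)
    -- well-posedness: the associated operator `𝒜 : U → V'` is invertible
    (hwp : ∀ L : StrongDual 𝕜 V, ∃! u : U, ∀ v : V, a u v = L v)
    -- a finite-dimensional Schauder decomposition of `U`
    (P : ℕ → U →L[𝕜] U)
    (hPfin : ∀ n, FiniteDimensional 𝕜 (LinearMap.range (P n : U →ₗ[𝕜] U)))
    (hPtend : ∀ u : U, Tendsto (fun n => P n u) atTop (nhds u))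
    (hPcomm : ∀ m n, m ≤ n → (P m).comp (P n) = P m ∧ (P n).comp (P m) = P m) :
    ∃ (Un : ℕ → Subspace 𝕜 U) (Vn : ℕ → Subspace 𝕜 V) (γ : ℝ), 0 < γ ∧
      (∀ n, FiniteDimensional 𝕜 (Un n)) ∧ (∀ n, FiniteDimensional 𝕜 (Vn n)) ∧
      (∀ u : U, Tendsto (fun n => infDist u (Un n : Set U)) atTop (nhds 0)) ∧
      (∀ v : V, Tendsto (fun n => infDist v (Vn n : Set V)) atTop (nhds 0)) ∧
      ∀ L : StrongDual 𝕜 V,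
        (∀ n, ∃! un : U, un ∈ Un n ∧ ∀ χ ∈ Vn n, a un χ = L χ) ∧
        (∀ u : U, (∀ v : V, a u v = L v) →
          ∀ n, ∀ un ∈ Un n, (∀ χ ∈ Vn n, a un χ = L χ) →
            ‖u - un‖ ≤ γ * infDist u (Un n : Set U)) :=
  stmt19_general hUrefl hVrefl a hwp P hPfin hPtend hPcomm
end
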